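/- arXiv:2105.07614 — 10 statements merged into one kernel-verified Lean document; each statement's English description precedes it below -/
import Mathlib

section
/- Let R be an r × t matrix with i.i.d. entries uniform on F_q, and let x, y be independent uniform random vectors in F_q^r, also independent of R. Then Pr(y ∉ span of columns of (R | x)) ≤ Pr(x ∉ span of columns of R). Consequently, the expected rank E[rk(R_{r,t})] of an r × t uniformly random matrix over F_q is a concave function of t: E[rk(R_{r,t+2})] − E[rk(R_{r,t+1})] ≤ E[rk(R_{r,t+1})] − E[rk(R_{r,t})]. -/
/-! Adjoining a column `x` to `R` raises the rank by one exactly when `x ∉ span R`, so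
`E rk(R_{r,t+1}) - E rk(R_{r,t}) = Pr(x ∉ span R)`. Adjoining a column can only enlarge the
span, so `Pr(y ∉ span(R | x)) ≤ Pr(y ∉ span R) = Pr(x ∉ span R)`; since `(R | x)` is uniform
on `r × (t + 1)` matrices, the left-hand side is the next increment
`E rk(R_{r,t+2}) - E rk(R_{r,t+1})`. -/

open scoped Classical

/-- The span of the columns of a matrix. -/
noncomputable def colSpan {F : Type} [Field F] {r t : ℕ}
    (A : Matrix (Fin r) (Fin t) F) : Submodule F (Fin r → F) :=
  Submodule.span F (Set.range (fun j : Fin t => fun i => A i j))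

/-- Juxtaposition `(A | x)` of a matrix with an extra column. -/
noncomputable def appendCol {F : Type} [Field F] {r t : ℕ}
    (A : Matrix (Fin r) (Fin t) F) (x : Fin r → F) : Matrix (Fin r) (Fin (t + 1)) F :=
  Matrix.of fun i j => if h : (j : ℕ) < t then A i ⟨j, h⟩ else x i

/-- Expected rank of an `r × t` uniformly random matrix over `F`. -/
noncomputable def expRank (F : Type) [Field F] [Fintype F] [DecidableEq F] (r t : ℕ) : ℝ :=
  (∑ A : Matrix (Fin r) (Fin t) F, (A.rank : ℝ)) /
    (Fintype.card (Matrix (Fin r) (Fin t) F) : ℝ)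

lemma sum_notMem_le_sum_notMem_of_subset {V : Type*} [Fintype V] {p q : Set V} (h : p ⊆ q) :
    ∑ y, (if y ∉ q then (1 : ℝ) else 0) ≤ ∑ y, if y ∉ p then (1 : ℝ) else 0 := by
  refine Finset.sum_le_sum fun y _ => ?_
  by_cases hy : y ∈ p
  · simp [hy, h hy]
  · rw [if_pos hy]
    split_ifs <;> norm_num

variable {F : Type} [Field F] {r t : ℕ}

@[simp]
lemma appendCol_castSucc (A : Matrix (Fin r) (Fin t) F) (x : Fin r → F) (i : Fin r) (j : Fin t) :
    appendCol A x i j.castSucc = A i j := by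
  simp [appendCol]

@[simp]
lemma appendCol_last (A : Matrix (Fin r) (Fin t) F) (x : Fin r → F) (i : Fin r) :
    appendCol A x i (Fin.last t) = x i := by
  simp [appendCol]

lemma cols_appendCol (A : Matrix (Fin r) (Fin t) F) (x : Fin r → F) :
    (fun j i => appendCol A x i j) =
      Fin.snoc (α := fun _ => Fin r → F) (fun j i => A i j) x := by
  ext j i
  induction j using Fin.lastCases <;> simp

lemma colSpan_appendCol (A : Matrix (Fin r) (Fin t) F) (x : Fin r → F) :
    colSpan (appendCol A x) = colSpan A ⊔ F ∙ x := by
  rw [colSpan, cols_appendCol, Fin.range_snoc, Submodule.span_insert, sup_comm, colSpan]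

lemma colSpan_le_colSpan_appendCol (A : Matrix (Fin r) (Fin t) F) (x : Fin r → F) :
    colSpan A ≤ colSpan (appendCol A x) :=
  colSpan_appendCol A x ▸ le_sup_left

lemma rank_eq_finrank_colSpan (A : Matrix (Fin r) (Fin t) F) :
    A.rank = Module.finrank F (colSpan A) :=
  A.rank_eq_finrank_span_cols

lemma rank_appendCol (A : Matrix (Fin r) (Fin t) F) (x : Fin r → F) :
    (appendCol A x).rank = A.rank + if x ∉ colSpan A then 1 else 0 := by
  rw [rank_eq_finrank_colSpan, rank_eq_finrank_colSpan, colSpan_appendCol]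
  by_cases hx : x ∈ colSpan A
  · rw [if_neg (not_not_intro hx), add_zero,
      sup_eq_left.mpr ((Submodule.span_singleton_le_iff_mem _ _).mpr hx)]
  · rw [if_pos hx]
    exact Submodule.finrank_sup_span_singleton hx

noncomputable def appendColEquiv (F : Type) [Field F] (r t : ℕ) :
    Matrix (Fin r) (Fin t) F × (Fin r → F) ≃ Matrix (Fin r) (Fin (t + 1)) F where
  toFun p := appendCol p.1 p.2
  invFun A := (A.submatrix id Fin.castSucc, fun i => A i (Fin.last t))
  left_inv p := by ext <;> simp
  right_inv A := by
    ext i j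
    induction j using Fin.lastCases <;> simp

variable [Fintype F]

lemma sum_matrix_succ_eq_sum_appendCol {M : Type*} [AddCommMonoid M]
    (f : Matrix (Fin r) (Fin (t + 1)) F → M) :
    ∑ A, f A = ∑ R : Matrix (Fin r) (Fin t) F, ∑ x, f (appendCol R x) := by
  rw [← (appendColEquiv F r t).sum_comp, Fintype.sum_prod_type]
  rfl

lemma card_matrix_succ :
    Fintype.card (Matrix (Fin r) (Fin (t + 1)) F) =
      Fintype.card (Matrix (Fin r) (Fin t) F) * Fintype.card (Fin r → F) := by
  rw [← Fintype.card_prod]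
  exact (Fintype.card_congr (appendColEquiv F r t)).symm

lemma sum_rank_succ :
    ∑ A : Matrix (Fin r) (Fin (t + 1)) F, (A.rank : ℝ) =
      Fintype.card (Fin r → F) * ∑ R : Matrix (Fin r) (Fin t) F, (R.rank : ℝ) +
        ∑ R : Matrix (Fin r) (Fin t) F, ∑ x, if x ∉ colSpan R then (1 : ℝ) else 0 := by
  simp only [sum_matrix_succ_eq_sum_appendCol, rank_appendCol, Nat.cast_add, Nat.cast_ite,
    Nat.cast_one, Nat.cast_zero, Finset.sum_add_distrib, Finset.sum_const, Finset.card_univ,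
    nsmul_eq_mul, Finset.mul_sum]

lemma expRank_succ_sub_expRank [DecidableEq F] :
    expRank F r (t + 1) - expRank F r t =
      (∑ R : Matrix (Fin r) (Fin t) F, ∑ x, if x ∉ colSpan R then (1 : ℝ) else 0) /
        ((Fintype.card (Matrix (Fin r) (Fin t) F) : ℝ) * Fintype.card (Fin r → F)) := by
  rw [expRank, expRank, sum_rank_succ, card_matrix_succ, Nat.cast_mul]
  field_simp
  ring

lemma sum_sum_notMem_colSpan_appendCol_le_card_mul :
    ∑ R : Matrix (Fin r) (Fin t) F, ∑ x, ∑ y,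
        (if y ∉ colSpan (appendCol R x) then (1 : ℝ) else 0) ≤
      Fintype.card (Fin r → F) *
        ∑ R : Matrix (Fin r) (Fin t) F, ∑ x, if x ∉ colSpan R then (1 : ℝ) else 0 := by
  rw [Finset.mul_sum]
  refine Finset.sum_le_sum fun R _ => ?_
  calc _ ≤ ∑ _x : Fin r → F, ∑ y, if y ∉ colSpan R then (1 : ℝ) else 0 :=
        Finset.sum_le_sum fun x _ =>
          sum_notMem_le_sum_notMem_of_subset (colSpan_le_colSpan_appendCol R x)
    _ = _ := by rw [Finset.sum_const, Finset.card_univ, nsmul_eq_mul]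

lemma prob_notMem_colSpan_appendCol_le :
    (∑ R : Matrix (Fin r) (Fin t) F, ∑ x, ∑ y,
        if y ∉ colSpan (appendCol R x) then (1 : ℝ) else 0) /
      ((Fintype.card (Matrix (Fin r) (Fin t) F) : ℝ) * Fintype.card (Fin r → F) *
        Fintype.card (Fin r → F)) ≤
    (∑ R : Matrix (Fin r) (Fin t) F, ∑ x, if x ∉ colSpan R then (1 : ℝ) else 0) /
      ((Fintype.card (Matrix (Fin r) (Fin t) F) : ℝ) * Fintype.card (Fin r → F)) := by
  have hN : (0 : ℝ) < Fintype.card (Matrix (Fin r) (Fin t) F) := by positivity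
  have hV : (0 : ℝ) < Fintype.card (Fin r → F) := by positivity
  rw [div_le_div_iff₀ (by positivity) (by positivity)]
  nlinarith [sum_sum_notMem_colSpan_appendCol_le_card_mul (F := F) (r := r) (t := t),
    mul_pos hN hV]

/-- For `R` an `r × t` uniformly random matrix over `F_q` and `x, y`
independent uniform vectors in `F_q^r` (independent of `R`),
`Pr(y ∉ span(R | x)) ≤ Pr(x ∉ span R)`; consequently the expected rank
`E[rk(R_{r,t})]` is concave in `t`. -/
theorem span_prob_mono_and_expRank_concave
    (F : Type) [Field F] [Fintype F] [DecidableEq F] (r t : ℕ) :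
    ((∑ R : Matrix (Fin r) (Fin t) F, ∑ x : Fin r → F, ∑ y : Fin r → F,
        if y ∉ colSpan (appendCol R x) then (1 : ℝ) else 0) /
      ((Fintype.card (Matrix (Fin r) (Fin t) F) : ℝ) *
        (Fintype.card (Fin r → F) : ℝ) * (Fintype.card (Fin r → F) : ℝ))
      ≤ (∑ R : Matrix (Fin r) (Fin t) F, ∑ x : Fin r → F,
          if x ∉ colSpan R then (1 : ℝ) else 0) /
        ((Fintype.card (Matrix (Fin r) (Fin t) F) : ℝ) *
          (Fintype.card (Fin r → F) : ℝ)))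
    ∧ expRank F r (t + 2) - expRank F r (t + 1)
        ≤ expRank F r (t + 1) - expRank F r t := by
  refine ⟨prob_notMem_colSpan_appendCol_le, ?_⟩
  rw [expRank_succ_sub_expRank, expRank_succ_sub_expRank, sum_matrix_succ_eq_sum_appendCol,
    card_matrix_succ, Nat.cast_mul]
  exact prob_notMem_colSpan_appendCol_le
end

section
/- The increment Δ E[rk(R_{r,t})] := E[rk(R_{r,t+1})] − E[rk(R_{r,t})] is monotonically nondecreasing in r; if q is finite and t is arbitrary, the increase from r to r+1 is strict. -/
/-!
Appending a uniform random column `v` to an `r × t` matrix `A` raises the rank by one unless `v`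
lies in the column space of `A`, which has probability `q ^ rk A / q ^ r`. Hence the increment is
`1 - E[q ^ rk R_{r,t}] / q ^ r`. Appending a row raises the rank by at most one, and not at all for
the zero row, so `E[q ^ rk R_{r+1,t}] < q * E[q ^ rk R_{r,t}]`, which is the strict monotonicity.
-/

open Matrix Module Submodule Finset
open scoped BigOperators

theorem Submodule.finrank_span_insert_of_notMem {K V : Type*} [DivisionRing K] [AddCommGroup V]
    [Module K V] [Module.Finite K V] {s : Set V} {v : V} (hv : v ∉ span K s) :
    finrank K (span K (insert v s)) = finrank K (span K s) + 1 := by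
  rw [span_insert, sup_comm, finrank_sup_span_singleton hv]

theorem Submodule.expect_ite_mem {K V : Type*} [DivisionRing K] [Fintype K] [AddCommGroup V]
    [Module K V] [Fintype V] (S : Submodule K V) [DecidablePred (· ∈ S)] :
    𝔼 v : V, (if v ∈ S then 1 else 0 : ℝ)
      = (Fintype.card K : ℝ) ^ finrank K S / (Fintype.card K : ℝ) ^ finrank K V := by
  rw [Fintype.expect_eq_sum_div_card, sum_boole, ← Fintype.card_subtype,
    card_eq_pow_finrank (K := K) (V := S), card_eq_pow_finrank (K := K) (V := V)]
  push_cast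
  rfl

namespace Matrix

def consRow {α : Type*} {n : Type*} {m : ℕ} (w : n → α) (A : Matrix (Fin m) n α) :
    Matrix (Fin (m + 1)) n α :=
  of (Fin.cons w A.row)

section RowAppend

variable {K : Type*} [Field K] {n : Type*} [Fintype n] {m : ℕ}

theorem rank_consRow_of_mem (A : Matrix (Fin m) n K) {w : n → K}
    (hw : w ∈ span K (Set.range A.row)) : (consRow w A).rank = A.rank := by
  rw [rank_eq_finrank_span_row, rank_eq_finrank_span_row, consRow, row_eq_self,
    Equiv.symm_apply_apply, Fin.range_cons, span_insert_eq_span hw]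

theorem rank_consRow_of_notMem (A : Matrix (Fin m) n K) {w : n → K}
    (hw : w ∉ span K (Set.range A.row)) : (consRow w A).rank = A.rank + 1 := by
  rw [rank_eq_finrank_span_row, rank_eq_finrank_span_row, consRow, row_eq_self,
    Equiv.symm_apply_apply, Fin.range_cons, finrank_span_insert_of_notMem hw]

theorem rank_consRow_le (A : Matrix (Fin m) n K) (w : n → K) :
    (consRow w A).rank ≤ A.rank + 1 := by
  by_cases hw : w ∈ span K (Set.range A.row)
  · rw [rank_consRow_of_mem A hw]; omega
  · rw [rank_consRow_of_notMem A hw]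

theorem expect_rank_consRow [Fintype K] [DecidableEq n] (A : Matrix (Fin m) n K) :
    𝔼 w : n → K, ((consRow w A).rank : ℝ)
      = A.rank + 1 - (Fintype.card K : ℝ) ^ A.rank / (Fintype.card K : ℝ) ^ Fintype.card n := by
  classical
  have hrank (w : n → K) : ((consRow w A).rank : ℝ)
      = A.rank + 1 - if w ∈ span K (Set.range A.row) then 1 else 0 := by
    split_ifs with hw
    · simp [rank_consRow_of_mem A hw]
    · simp [rank_consRow_of_notMem A hw]
  simp only [hrank, expect_sub_distrib, Fintype.expect_const, Submodule.expect_ite_mem,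
    finrank_fintype_fun_eq_card, ← rank_eq_finrank_span_row]

end RowAppend

theorem expect_consRow {α : Type*} [Fintype α] {n : Type*} [Fintype n] [DecidableEq n] {m : ℕ}
    (f : Matrix (Fin (m + 1)) n α → ℝ) :
    𝔼 B, f B = 𝔼 w : n → α, 𝔼 A : Matrix (Fin m) n α, f (consRow w A) := by
  rw [← expect_product', univ_product_univ]
  exact (Fintype.expect_equiv (Fin.consEquiv fun _ => n → α) _ _ fun _ => rfl).symm

theorem expect_rank_transpose {K : Type*} [Field K] [Fintype K] {m n : Type*} [Fintype m]
    [Fintype n] [DecidableEq m] [DecidableEq n] (f : ℕ → ℝ) :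
    𝔼 A : Matrix m n K, f A.rank = 𝔼 B : Matrix n m K, f B.rank :=
  Fintype.expect_equiv (transposeAddEquiv m n K).toEquiv _ _ fun A => by simp

theorem expect_pow_rank_consRow_lt {K : Type*} [Field K] [Fintype K] {n : Type*} [Fintype n]
    [DecidableEq n] (m : ℕ) :
    𝔼 B : Matrix (Fin (m + 1)) n K, (Fintype.card K : ℝ) ^ B.rank
      < (𝔼 A : Matrix (Fin m) n K, (Fintype.card K : ℝ) ^ A.rank) * Fintype.card K := by
  have hq : (1 : ℝ) < Fintype.card K := by exact_mod_cast Fintype.one_lt_card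
  calc 𝔼 B : Matrix (Fin (m + 1)) n K, (Fintype.card K : ℝ) ^ B.rank
      = 𝔼 w : n → K, 𝔼 A : Matrix (Fin m) n K, (Fintype.card K : ℝ) ^ (consRow w A).rank :=
        expect_consRow _
    _ < 𝔼 w : n → K, 𝔼 A : Matrix (Fin m) n K, (Fintype.card K : ℝ) ^ (A.rank + 1) :=
        expect_lt_expect
          (fun w _ => expect_le_expect fun A _ => pow_le_pow_right₀ hq.le (rank_consRow_le A w))
          ⟨0, mem_univ _, expect_lt_expect
            (fun A _ => pow_le_pow_right₀ hq.le (rank_consRow_le A 0))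
            ⟨0, mem_univ _, by
              rw [rank_consRow_of_mem _ (zero_mem _)]
              exact pow_lt_pow_right₀ hq (Nat.lt_succ_self _)⟩⟩
    _ = (𝔼 A : Matrix (Fin m) n K, (Fintype.card K : ℝ) ^ A.rank) * Fintype.card K := by
        simp only [pow_succ, ← expect_mul, Fintype.expect_const]

end Matrix

section ExpectedRank

variable {F : Type} [Field F] [Fintype F] [DecidableEq F]

theorem expRank_eq_expect (r t : ℕ) :
    expRank F r t = 𝔼 A : Matrix (Fin r) (Fin t) F, (A.rank : ℝ) :=
  (Fintype.expect_eq_sum_div_card _).symm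

theorem expRank_comm (r t : ℕ) : expRank F r t = expRank F t r := by
  simp only [expRank_eq_expect]
  exact expect_rank_transpose _

theorem expRank_succ_left_sub (r t : ℕ) :
    expRank F (r + 1) t - expRank F r t
      = 1 - (𝔼 A : Matrix (Fin r) (Fin t) F, (Fintype.card F : ℝ) ^ A.rank)
          / (Fintype.card F : ℝ) ^ t := by
  rw [expRank_eq_expect, expRank_eq_expect, expect_consRow, expect_comm]
  simp only [expect_rank_consRow, Fintype.card_fin, expect_sub_distrib, expect_add_distrib,
    Fintype.expect_const, expect_div]
  ring

theorem expRank_succ_right_sub (r t : ℕ) :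
    expRank F r (t + 1) - expRank F r t
      = 1 - (𝔼 A : Matrix (Fin r) (Fin t) F, (Fintype.card F : ℝ) ^ A.rank)
          / (Fintype.card F : ℝ) ^ r := by
  rw [expRank_comm r, expRank_comm r, expRank_succ_left_sub, expect_rank_transpose]

end ExpectedRank

/-- The increment `Δ E[rk(R_{r,t})] := E[rk(R_{r,t+1})] − E[rk(R_{r,t})]`
is monotonically nondecreasing in `r`; since `q` is finite, the increase
from `r` to `r+1` is strict (for every `t`). -/
theorem expRank_increment_mono_in_r
    (F : Type) [Field F] [Fintype F] [DecidableEq F] (r t : ℕ) :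
    expRank F r (t + 1) - expRank F r t
      ≤ expRank F (r + 1) (t + 1) - expRank F (r + 1) t
    ∧ expRank F r (t + 1) - expRank F r t
      < expRank F (r + 1) (t + 1) - expRank F (r + 1) t := by
  have key : expRank F r (t + 1) - expRank F r t
      < expRank F (r + 1) (t + 1) - expRank F (r + 1) t := by
    rw [expRank_succ_right_sub, expRank_succ_right_sub, sub_lt_sub_iff_left,
      div_lt_div_iff₀ (by positivity) (by positivity)]
    calc _ < _ * _ := mul_lt_mul_of_pos_right (expect_pow_rank_consRow_lt r) (by positivity)
      _ = _ := by ring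
  exact ⟨key.le, key⟩
end

section
/- The difference Δ E[rk(R_{r+1,t+1})] − Δ E[rk(R_{r,t})] equals Σ_{i=0}^{min(r,t)} Pr(rk(R_{r,t}) = i)·q^(i−r)·(q−1)·(q^(i−t)·q^(i−r)·q^(−2) − (q^(i−t)−1)(q^(i−r)−1)). -/
/-!
Condition on the rank `j` of the top-left `r × t` block. Appending a uniform random column of
length `c` to a matrix whose columns span a `j`-dimensional subspace of `F^c` keeps the rank with
probability `q^(j-c)` and raises it by one otherwise; by transposition the same holds for rows.
Peeling off the extra rows and columns thus writes each of the four expected ranks as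
`E[g(rk R_{r,t})]` for an explicit `g`, and the claim reduces to an identity between rational
functions of `q`, `q^(j-r)` and `q^(j-t)`, valid for every `j`.
-/

open Finset Submodule

/-- `Pr(rk(R_{r,t}) = i)` for an `r × t` uniformly random matrix over `F`. -/
noncomputable def probRank (F : Type) [Field F] [Fintype F] [DecidableEq F]
    (r t i : ℕ) : ℝ :=
  (∑ A : Matrix (Fin r) (Fin t) F, if A.rank = i then (1 : ℝ) else 0) /
    (Fintype.card (Matrix (Fin r) (Fin t) F) : ℝ)

theorem Matrix.range_row_of_cons {α : Type*} {r t : ℕ} (c : Fin t → α)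
    (A : Matrix (Fin r) (Fin t) α) :
    Set.range (Matrix.of (Fin.cons c A.row)).row = insert c (Set.range A.row) :=
  Fin.range_cons c A.row

section RankOfCons

variable {F : Type*} [Field F] {r t : ℕ} {c : Fin t → F} {A : Matrix (Fin r) (Fin t) F}

theorem Matrix.rank_of_cons_of_mem (hc : c ∈ span F (Set.range A.row)) :
    (Matrix.of (Fin.cons c A.row)).rank = A.rank := by
  rw [rank_eq_finrank_span_row, rank_eq_finrank_span_row, range_row_of_cons,
    span_insert_eq_span hc]

theorem Matrix.rank_of_cons_of_notMem (hc : c ∉ span F (Set.range A.row)) :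
    (Matrix.of (Fin.cons c A.row)).rank = A.rank + 1 := by
  rw [rank_eq_finrank_span_row, rank_eq_finrank_span_row, range_row_of_cons, span_insert,
    sup_comm, finrank_sup_span_singleton hc]

end RankOfCons

theorem Submodule.sum_univ_ite_mem {K V : Type*} [Field K] [Fintype K] [AddCommGroup V]
    [Module K V] [Fintype V] (W : Submodule K V) [DecidablePred (· ∈ W)] (a b : ℝ) :
    ∑ v : V, (if v ∈ W then a else b) =
      (Fintype.card K : ℝ) ^ Module.finrank K W * a +
        ((Fintype.card K : ℝ) ^ Module.finrank K V - (Fintype.card K : ℝ) ^ Module.finrank K W)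
          * b := by
  have hW : (#{v | v ∈ W} : ℝ) = (Fintype.card K : ℝ) ^ Module.finrank K W := by
    rw [← Fintype.card_subtype, Module.card_eq_pow_finrank (K := K)]
    push_cast
    rfl
  have hV : (#{v | v ∈ W} : ℝ) + #{v | v ∉ W} = (Fintype.card K : ℝ) ^ Module.finrank K V := by
    rw [← Nat.cast_add, card_filter_add_card_filter_not, card_univ,
      Module.card_eq_pow_finrank (K := K)]
    push_cast
    rfl
  rw [sum_ite, sum_const, sum_const, nsmul_eq_mul, nsmul_eq_mul, ← hW, ← hV]
  ring

/-- A uniform vector of `F^c` lies in a fixed `j`-dimensional subspace with probability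
`q^(j-c)`, in which case adjoining it keeps the rank `j`; otherwise the rank becomes `j + 1`. -/
noncomputable def rankStep (q : ℝ) (c : ℕ) (g : ℕ → ℝ) (j : ℕ) : ℝ :=
  q ^ ((j : ℤ) - c) * g j + (1 - q ^ ((j : ℤ) - c)) * g (j + 1)

/-- `E[g(rk R_{r,t})]`. -/
noncomputable def expOfRank (F : Type*) [Field F] [Fintype F] (r t : ℕ) (g : ℕ → ℝ) : ℝ :=
  (∑ A : Matrix (Fin r) (Fin t) F, g A.rank) / Fintype.card (Matrix (Fin r) (Fin t) F)

section ExpOfRank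

variable {F : Type*} [Field F] [Fintype F] {r t : ℕ}

theorem Matrix.sum_rank_of_cons (g : ℕ → ℝ) (A : Matrix (Fin r) (Fin t) F) :
    ∑ c : Fin t → F, g (Matrix.of (Fin.cons c A.row)).rank =
      (Fintype.card F : ℝ) ^ t * rankStep (Fintype.card F) t g A.rank := by
  classical
  have hq : (Fintype.card F : ℝ) ≠ 0 := by positivity
  calc ∑ c : Fin t → F, g (Matrix.of (Fin.cons c A.row)).rank
      = ∑ c : Fin t → F,
          if c ∈ span F (Set.range A.row) then g A.rank else g (A.rank + 1) := by
        refine sum_congr rfl fun c _ => ?_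
        split_ifs with hc
        · rw [rank_of_cons_of_mem hc]
        · rw [rank_of_cons_of_notMem hc]
    _ = _ := by
        rw [Submodule.sum_univ_ite_mem, ← A.rank_eq_finrank_span_row, Module.finrank_fin_fun,
          rankStep, zpow_sub₀ hq, zpow_natCast, zpow_natCast]
        field_simp

theorem expOfRank_succ_left (g : ℕ → ℝ) :
    expOfRank F (r + 1) t g = expOfRank F r t (rankStep (Fintype.card F) t g) := by
  let e : (Fin t → F) × Matrix (Fin r) (Fin t) F ≃ Matrix (Fin (r + 1)) (Fin t) F :=
    ((Equiv.refl _).prodCongr Matrix.of.symm).trans ((Fin.consEquiv _).trans Matrix.of)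
  have hsum : ∑ M : Matrix (Fin (r + 1)) (Fin t) F, g M.rank
      = ∑ A : Matrix (Fin r) (Fin t) F, ∑ c : Fin t → F,
          g (Matrix.of (Fin.cons c A.row)).rank := by
    rw [← Fintype.sum_equiv e _ _ fun _ => rfl, Fintype.sum_prod_type, sum_comm]
    rfl
  have hcard : (Fintype.card (Matrix (Fin (r + 1)) (Fin t) F) : ℝ)
      = (Fintype.card F : ℝ) ^ t * Fintype.card (Matrix (Fin r) (Fin t) F) := by
    rw [← Fintype.card_congr e, Fintype.card_prod, Fintype.card_fun, Fintype.card_fin]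
    push_cast
    rfl
  have hq : (Fintype.card F : ℝ) ≠ 0 := by positivity
  rw [expOfRank, expOfRank, hsum, hcard]
  simp_rw [Matrix.sum_rank_of_cons, ← mul_sum]
  rw [mul_div_mul_left _ _ (pow_ne_zero _ hq)]

theorem expOfRank_comm (g : ℕ → ℝ) : expOfRank F r t g = expOfRank F t r g := by
  let e := (Matrix.transposeAddEquiv (Fin r) (Fin t) F).toEquiv
  rw [expOfRank, expOfRank, Fintype.card_congr e,
    Fintype.sum_equiv e _ (fun B => g B.rank) fun A => by rw [← A.rank_transpose]; rfl]

theorem expOfRank_succ_right (g : ℕ → ℝ) :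
    expOfRank F r (t + 1) g = expOfRank F r t (rankStep (Fintype.card F) r g) := by
  rw [expOfRank_comm, expOfRank_succ_left, expOfRank_comm]

theorem expOfRank_sub (f g : ℕ → ℝ) :
    expOfRank F r t f - expOfRank F r t g = expOfRank F r t (fun j => f j - g j) := by
  rw [expOfRank, expOfRank, expOfRank, sum_sub_distrib, sub_div]

end ExpOfRank

theorem expRank_eq_expOfRank {F : Type} [Field F] [Fintype F] [DecidableEq F] {r t : ℕ} :
    expRank F r t = expOfRank F r t (fun j => (j : ℝ)) := rfl

theorem sum_probRank_mul {F : Type} [Field F] [Fintype F] [DecidableEq F] {r t : ℕ}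
    (f : ℕ → ℝ) :
    ∑ i ∈ range (min r t + 1), probRank F r t i * f i = expOfRank F r t f := by
  simp_rw [probRank, div_mul_eq_mul_div, ← sum_div, sum_mul, ite_mul, one_mul, zero_mul]
  rw [sum_comm, expOfRank]
  congr 1
  refine sum_congr rfl fun A _ => (sum_ite_eq _ _ _).trans (if_pos ?_)
  exact mem_range_succ_iff.mpr (le_min A.rank_le_height A.rank_le_width)

/-- `Δ E[rk(R_{r+1,t+1})] − Δ E[rk(R_{r,t})]
= Σ_{i=0}^{min(r,t)} Pr(rk(R_{r,t}) = i)·q^(i−r)·(q−1)·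
  (q^(i−t)·q^(i−r)·q^(−2) − (q^(i−t)−1)(q^(i−r)−1))`. -/
theorem expRank_increment_diagonal_difference
    (F : Type) [Field F] [Fintype F] [DecidableEq F] (r t : ℕ) :
    (expRank F (r + 1) (t + 2) - expRank F (r + 1) (t + 1))
      - (expRank F r (t + 1) - expRank F r t)
    = ∑ i ∈ Finset.range (min r t + 1),
        probRank F r t i * (Fintype.card F : ℝ) ^ ((i : ℤ) - r) *
          ((Fintype.card F : ℝ) - 1) *
          ((Fintype.card F : ℝ) ^ ((i : ℤ) - t) * (Fintype.card F : ℝ) ^ ((i : ℤ) - r) *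
              (Fintype.card F : ℝ) ^ (-2 : ℤ)
            - ((Fintype.card F : ℝ) ^ ((i : ℤ) - t) - 1) *
                ((Fintype.card F : ℝ) ^ ((i : ℤ) - r) - 1)) := by
  simp only [expRank_eq_expOfRank, expOfRank_succ_right, expOfRank_succ_left, expOfRank_sub,
    mul_assoc, sum_probRank_mul]
  congr 1
  funext j
  have hq : (Fintype.card F : ℝ) ≠ 0 := by positivity
  simp only [rankStep]
  push_cast
  simp only [zpow_sub₀ hq, zpow_add₀ hq, zpow_natCast, zpow_neg, zpow_one]
  field_simp
  ring
end

section
/- If the binary packet-loss process {Z_t} is stationary (for every k, (Z_1,…,Z_n) and (Z_{1+k},…,Z_{n+k}) have the same joint distribution), then the expected rank function E_r(t) := E[rk(R_{r,t}·Z_t)], where Z_t = diag(Z_1,…,Z_t), is monotonically nondecreasing and concave in t for every r. -/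
open MeasureTheory

/-- Expected rank `E_r(t) = E[rk(R_{r,t}·diag(Z_1,…,Z_t))]`, where `R_{r,t}` is an
`r × t` uniformly random matrix over `F` (independent of the loss process) and the loss
process is distributed according to `μ`. -/
noncomputable def Estat (F : Type) [Field F] [Fintype F] [DecidableEq F]
    (μ : Measure (ℕ → Bool)) (r t : ℕ) : ℝ :=
  ∫ ω, ((∑ R : Matrix (Fin r) (Fin t) F,
      ((R * Matrix.diagonal (fun j : Fin t => if ω (j : ℕ) then (1 : F) else 0)).rank : ℝ)) /
    (Fintype.card (Matrix (Fin r) (Fin t) F) : ℝ)) ∂μ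

/-!
Given the loss pattern, `R * diag(Z)` zeroes the lost columns, so its rank is the dimension of
the span of the received columns: `N_t = Z_1 + ⋯ + Z_t` independent uniform vectors of `F^r`.
Hence `E_r(t) = E[g(N_t)]`, where `g(s)` is the expected dimension of the span of `s` uniform
vectors. A fresh uniform vector raises the dimension exactly when it leaves the current span `W`,
which happens with probability `1 - |W|/|V|`; as `W` only grows, these increments are
nonnegative and nonincreasing, so `g` is monotone and concave.

Monotonicity of `E_r` follows from `N_t ≤ N_{t+1}`. For concavity, stationarity rewrites
`E_r(t+1) - E_r(t)` as the same expectation for the counts `N'` of the shifted process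
`Z_2, Z_3, …`. Both `E_r(t+2) - E_r(t+1)` and this expression add the packet `Z_{t+2}`, on top of
`N_{t+1}` and `N'_t ≤ N_{t+1}` received packets respectively, and concavity of `g` compares them.
-/

open Module Submodule
open scoped BigOperators

theorem expect_pi_fin_succ {α M : Type*} [Fintype α] [AddCommMonoid M] [Module ℚ≥0 M] {s : ℕ}
    (f : (Fin (s + 1) → α) → M) :
    𝔼 v, f v = 𝔼 u : Fin s → α, 𝔼 x, f (Fin.cons x u) := by
  rw [← Fintype.expect_equiv (Fin.consEquiv fun _ => α) _ _ fun _ => rfl,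
    ← Finset.univ_product_univ, Finset.expect_product, Finset.expect_comm]
  rfl

theorem expect_pi_restrict {ι α M : Type*} [Fintype ι] [DecidableEq ι] [Fintype α] [Nonempty α]
    [AddCommMonoid M] [Module ℚ≥0 M] (p : ι → Prop) [DecidablePred p]
    (f : ({i // p i} → α) → M) :
    𝔼 v : ι → α, f (fun i => v i) = 𝔼 u, f u := by
  calc 𝔼 v : ι → α, f (fun i => v i)
      = 𝔼 w : ({i // p i} → α) × ({i // ¬p i} → α), f w.1 :=
        Fintype.expect_equiv (Equiv.piEquivPiSubtypeProd p fun _ => α) _ _ fun _ => rfl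
    _ = 𝔼 u, f u := by
        rw [← Finset.univ_product_univ, Finset.expect_product]
        simp only [Fintype.expect_const]

theorem span_range_ite_zero {R M ι : Type*} [Semiring R] [AddCommMonoid M] [Module R M]
    (p : ι → Prop) [DecidablePred p] (v : ι → M) :
    span R (Set.range fun i => if p i then v i else 0)
      = span R (Set.range fun i : {i // p i} => v i) := by
  apply le_antisymm
  · rw [span_le]
    rintro _ ⟨i, rfl⟩
    by_cases hi : p i
    · simp only [if_pos hi]
      exact subset_span ⟨⟨i, hi⟩, rfl⟩
    · simp [hi]
  · refine span_mono ?_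
    rintro _ ⟨⟨i, hi⟩, rfl⟩
    exact ⟨i, if_pos hi⟩

theorem expect_boole_eq_card_div {α : Type*} [Fintype α] (p : α → Prop) [DecidablePred p] :
    𝔼 x, (if p x then (1 : ℝ) else 0) = Nat.card {x // p x} / Nat.card α := by
  rw [Fintype.expect_eq_sum_div_card, Finset.sum_boole, ← Fintype.card_subtype,
    Nat.card_eq_fintype_card, Nat.card_eq_fintype_card]

section
variable {F V : Type*} [DivisionRing F] [AddCommGroup V] [Module F V]

theorem finrank_span_insert [FiniteDimensional F V] (x : V) (s : Set V)
    [Decidable (x ∈ span F s)] :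
    finrank F (span F (insert x s)) = finrank F (span F s) + if x ∈ span F s then 0 else 1 := by
  rw [span_insert, sup_comm]
  split_ifs with hx
  · rw [sup_eq_left.mpr ((span_singleton_le_iff_mem x _).mpr hx), add_zero]
  · exact finrank_sup_span_singleton hx

variable [Fintype V]

theorem expect_finrank_span_insert (s : Set V) :
    𝔼 x : V, (finrank F (span F (insert x s)) : ℝ)
      = finrank F (span F s) + (1 - Nat.card (span F s) / Nat.card V) := by
  classical
  have hboole : ∀ x : V, ((if x ∈ span F s then 0 else 1 : ℕ) : ℝ)
      = 1 - if x ∈ span F s then 1 else 0 := fun x => by split_ifs <;> norm_num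
  simp only [finrank_span_insert, Nat.cast_add, Finset.expect_add_distrib, Fintype.expect_const,
    hboole, Finset.expect_sub_distrib, expect_boole_eq_card_div]

variable (F V) in
noncomputable def expectedFinrankSpan (s : ℕ) : ℝ :=
  𝔼 v : Fin s → V, (finrank F (span F (Set.range v)) : ℝ)

theorem expectedFinrankSpan_succ (s : ℕ) :
    expectedFinrankSpan F V (s + 1) = expectedFinrankSpan F V s
      + (1 - 𝔼 v : Fin s → V, ((Nat.card (span F (Set.range v)) : ℝ) / Nat.card V)) := by
  rw [expectedFinrankSpan, expect_pi_fin_succ]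
  have hcons : ∀ (u : Fin s → V) x,
      (finrank F (span F (Set.range (Fin.cons x u : Fin (s + 1) → V))) : ℝ)
        = finrank F (span F (insert x (Set.range u))) := fun u x => by rw [Fin.range_cons]
  simp only [hcons, expect_finrank_span_insert]
  rw [Finset.expect_add_distrib, Finset.expect_sub_distrib, Fintype.expect_const]
  rfl

theorem expect_card_span_le_succ (s : ℕ) :
    𝔼 v : Fin s → V, (Nat.card (span F (Set.range v)) : ℝ)
      ≤ 𝔼 v : Fin (s + 1) → V, (Nat.card (span F (Set.range v)) : ℝ) := by
  rw [expect_pi_fin_succ]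
  refine Finset.expect_le_expect fun v _ => ?_
  rw [← Fintype.expect_const (ι := V) (Nat.card (span F (Set.range v)) : ℝ)]
  refine Finset.expect_le_expect fun x _ => ?_
  rw [Fin.range_cons]
  exact_mod_cast Nat.card_mono (Set.toFinite _) (span_mono (Set.subset_insert x _))

theorem expectedFinrankSpan_mono : Monotone (expectedFinrankSpan F V) := by
  refine monotone_nat_of_le_succ fun s => ?_
  rw [expectedFinrankSpan_succ, le_add_iff_nonneg_right, sub_nonneg]
  refine Finset.expect_le Finset.univ_nonempty fun v _ => div_le_one_of_le₀ ?_ (Nat.cast_nonneg _)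
  exact_mod_cast Finite.card_subtype_le _

theorem antitone_expectedFinrankSpan_succ_sub :
    Antitone fun s => expectedFinrankSpan F V (s + 1) - expectedFinrankSpan F V s := by
  refine antitone_nat_of_succ_le fun s => ?_
  simp only [expectedFinrankSpan_succ, add_sub_cancel_left, ← Finset.expect_div]
  gcongr
  exact expect_card_span_le_succ s

theorem expect_finrank_span_eq_expectedFinrankSpan (ι : Type*) [Fintype ι] [DecidableEq ι] :
    𝔼 v : ι → V, (finrank F (span F (Set.range v)) : ℝ)
      = expectedFinrankSpan F V (Fintype.card ι) :=
  Fintype.expect_equiv ((Fintype.equivFin ι).arrowCongr (Equiv.refl V)) _ _ fun v => by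
    change _ = ((finrank F (span F (Set.range (v ∘ (Fintype.equivFin ι).symm))) : ℕ) : ℝ)
    rw [(Fintype.equivFin ι).symm.surjective.range_comp]

end

section
variable {F : Type*} [Field F] {m n : Type*} [Fintype n] [DecidableEq n]

open Matrix

theorem rank_mul_diagonal_boole (R : Matrix m n F) (p : n → Prop) [DecidablePred p] :
    (R * diagonal fun j => if p j then (1 : F) else 0).rank
      = finrank F (span F (Set.range fun j : {j // p j} => R.col j)) := by
  have hcol : (R * diagonal fun j => if p j then (1 : F) else 0).col
      = fun j => if p j then R.col j else 0 := by
    ext j i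
    by_cases hj : p j <;> simp [hj, mul_diagonal]
  rw [rank_eq_finrank_span_cols, hcol, span_range_ite_zero]

theorem expect_rank_mul_diagonal_boole [Fintype F] [Fintype m] [DecidableEq m] (p : n → Prop)
    [DecidablePred p] :
    𝔼 R : Matrix m n F, ((R * diagonal fun j => if p j then (1 : F) else 0).rank : ℝ)
      = expectedFinrankSpan F (m → F) (Fintype.card {j // p j}) := by
  rw [← expect_finrank_span_eq_expectedFinrankSpan, ← expect_pi_restrict p]
  refine Fintype.expect_equiv (transposeAddEquiv m n F).toEquiv _ _ fun R => ?_
  rw [rank_mul_diagonal_boole]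
  rfl

end

-- `ω i` plays the role of `Z_{i+1}`, so `countTrue t ω = Z_1 + ⋯ + Z_t`.
def countTrue (t : ℕ) (ω : ℕ → Bool) : ℕ :=
  ∑ i ∈ Finset.range t, if ω i then 1 else 0

theorem card_subtype_fin_eq_countTrue (t : ℕ) (ω : ℕ → Bool) :
    Fintype.card {j : Fin t // ω j = true} = countTrue t ω := by
  rw [Fintype.card_subtype, Finset.card_filter, countTrue,
    Fin.sum_univ_eq_sum_range (fun i => if ω i = true then 1 else 0)]

theorem countTrue_succ (t : ℕ) (ω : ℕ → Bool) :
    countTrue (t + 1) ω = countTrue t ω + if ω t then 1 else 0 :=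
  Finset.sum_range_succ _ t

theorem countTrue_succ' (t : ℕ) (ω : ℕ → Bool) :
    countTrue (t + 1) ω = countTrue t (fun n => ω (n + 1)) + if ω 0 then 1 else 0 :=
  Finset.sum_range_succ' _ t

theorem countTrue_le (t : ℕ) (ω : ℕ → Bool) : countTrue t ω ≤ t :=
  (Finset.sum_le_card_nsmul _ _ 1 fun _ _ => by split_ifs <;> simp).trans_eq (by simp)

theorem measurable_countTrue (t : ℕ) : Measurable (countTrue t) :=
  Finset.measurable_sum _ fun i _ =>
    (measurable_from_top (f := fun b : Bool => if b then 1 else 0)).comp (measurable_pi_apply i)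

theorem integrable_comp_countTrue (μ : Measure (ℕ → Bool)) [IsFiniteMeasure μ] (h : ℕ → ℝ)
    (t : ℕ) :
    Integrable (fun ω => h (countTrue t ω)) μ := by
  refine .of_bound (measurable_from_top.comp (measurable_countTrue t)).aestronglyMeasurable
    (∑ n ∈ Finset.range (t + 1), |h n|) (.of_forall fun ω => ?_)
  exact Finset.single_le_sum (fun n _ => abs_nonneg (h n))
    (Finset.mem_range.mpr (Nat.lt_succ_of_le (countTrue_le t ω)))

theorem sub_comp_countTrue_le_shift {g : ℕ → ℝ} (hg : Antitone fun s => g (s + 1) - g s)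
    (t : ℕ) (ω : ℕ → Bool) :
    g (countTrue (t + 2) ω) - g (countTrue (t + 1) ω)
      ≤ g (countTrue (t + 1) (fun n => ω (n + 1))) - g (countTrue t (fun n => ω (n + 1))) := by
  have hle : countTrue t (fun n => ω (n + 1)) ≤ countTrue (t + 1) ω := by
    rw [countTrue_succ']
    exact Nat.le_add_right _ _
  rw [countTrue_succ (t + 1) ω, countTrue_succ t (fun n => ω (n + 1))]
  cases ω (t + 1)
  · simp
  · exact hg hle

theorem MeasureTheory.MeasurePreserving.integral_comp_of_aestronglyMeasurable {α β : Type*}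
    [MeasurableSpace α] [MeasurableSpace β] {μ : Measure α} {ν : Measure β} {f : α → β}
    {G : Type*} [NormedAddCommGroup G] [NormedSpace ℝ G]
    (hf : MeasurePreserving f μ ν) {g : β → G} (hg : AEStronglyMeasurable g ν) :
    ∫ x, g (f x) ∂μ = ∫ y, g y ∂ν := by
  rw [← hf.map_eq] at hg ⊢
  exact (integral_map hf.measurable.aemeasurable hg).symm

theorem Estat_eq_integral_expectedFinrankSpan (F : Type) [Field F] [Fintype F] [DecidableEq F]
    (μ : Measure (ℕ → Bool)) (r t : ℕ) :
    Estat F μ r t = ∫ ω, expectedFinrankSpan F (Fin r → F) (countTrue t ω) ∂μ := by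
  refine integral_congr_ae (.of_forall fun ω => ?_)
  dsimp only
  rw [← Fintype.expect_eq_sum_div_card, expect_rank_mul_diagonal_boole,
    card_subtype_fin_eq_countTrue]

/-- If the binary packet-loss process `{Z_t}` is stationary (its law `μ` is
shift invariant, so all its finite-dimensional distributions are shift invariant), then
`E_r(t) = E[rk(R_{r,t}·diag(Z_1,…,Z_t))]` is monotonically nondecreasing and concave
in `t` for every `r`. -/
theorem Estat_monotone_concave
    (F : Type) [Field F] [Fintype F] [DecidableEq F]
    (μ : Measure (ℕ → Bool)) [IsProbabilityMeasure μ]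
    (hstat : ∀ k : ℕ, μ.map (fun ω n => ω (n + k)) = μ) (r : ℕ) :
    (∀ t : ℕ, Estat F μ r t ≤ Estat F μ r (t + 1))
    ∧ ∀ t : ℕ, Estat F μ r (t + 2) - Estat F μ r (t + 1)
        ≤ Estat F μ r (t + 1) - Estat F μ r t := by
  set g := expectedFinrankSpan F (Fin r → F)
  have hE (t : ℕ) : Estat F μ r t = ∫ ω, g (countTrue t ω) ∂μ :=
    Estat_eq_integral_expectedFinrankSpan F μ r t
  have hint (t : ℕ) : Integrable (fun ω => g (countTrue t ω)) μ := integrable_comp_countTrue μ g t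
  have hshift : MeasurePreserving (fun (ω : ℕ → Bool) n => ω (n + 1)) μ μ :=
    ⟨measurable_pi_lambda _ fun n => measurable_pi_apply (n + 1), hstat 1⟩
  refine ⟨fun t => ?_, fun t => ?_⟩
  · rw [hE, hE]
    refine integral_mono (hint t) (hint (t + 1)) fun ω => expectedFinrankSpan_mono ?_
    rw [countTrue_succ]
    exact Nat.le_add_right _ _
  · have hincr : Integrable (fun ω => g (countTrue (t + 1) ω) - g (countTrue t ω)) μ :=
      (hint _).sub (hint _)
    calc Estat F μ r (t + 2) - Estat F μ r (t + 1)
        = ∫ ω, (g (countTrue (t + 2) ω) - g (countTrue (t + 1) ω)) ∂μ := by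
          rw [hE, hE, integral_sub (hint _) (hint _)]
      _ ≤ ∫ ω, (g (countTrue (t + 1) (fun n => ω (n + 1)))
            - g (countTrue t (fun n => ω (n + 1)))) ∂μ :=
          integral_mono ((hint _).sub (hint _)) (hshift.integrable_comp_of_integrable hincr)
            (sub_comp_countTrue_le_shift antitone_expectedFinrankSpan_succ_sub t)
      _ = ∫ ω, (g (countTrue (t + 1) ω) - g (countTrue t ω)) ∂μ :=
          hshift.integral_comp_of_aestronglyMeasurable hincr.aestronglyMeasurable
      _ = Estat F μ r (t + 1) - Estat F μ r t := by
          rw [hE, hE, integral_sub (hint _) (hint _)]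
end

section
/- Under a stationary loss process {Z_t}, the single-step expected-rank gain is nondecreasing in the rank: E_{r+1}(t+1) − E_{r+1}(t) ≥ E_r(t+1) − E_r(t) for all r, t. If q is finite and Pr(Z_{t+1} = 1) ≠ 0, the inequality is strict. -/
open MeasureTheory

set_option linter.unusedSectionVars false

open Matrix Module

variable {F : Type} [Field F] [Fintype F] [DecidableEq F]

/-- append a column -/
def colApp {r t : ℕ} (A : Matrix (Fin r) (Fin t) F) (v : Fin r → F) :
    Matrix (Fin r) (Fin (t + 1)) F := (Fin.snoc (Aᵀ) v)ᵀ

lemma colApp_castSucc {r t : ℕ} (A : Matrix (Fin r) (Fin t) F) (v : Fin r → F) (i : Fin r)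
    (j : Fin t) : colApp A v i j.castSucc = A i j :=
  congrFun (Fin.snoc_castSucc (α := fun _ => Fin r → F) (p := fun j => Aᵀ j) (x := v) (i := j)) i

lemma colApp_last {r t : ℕ} (A : Matrix (Fin r) (Fin t) F) (v : Fin r → F) (i : Fin r) :
    colApp A v i (Fin.last t) = v i :=
  congrFun (Fin.snoc_last (α := fun _ => Fin r → F) (p := fun j => Aᵀ j) (x := v)) i

lemma colApp_col {r t : ℕ} (A : Matrix (Fin r) (Fin t) F) (v : Fin r → F) :
    (colApp A v).col = Fin.snoc (α := fun _ => Fin r → F) (fun j => Aᵀ j) v := rfl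

lemma range_snoc' {n : ℕ} {α : Type*} (f : Fin n → α) (a : α) :
    Set.range (Fin.snoc f a : Fin (n + 1) → α) = insert a (Set.range f) := by
  ext y
  constructor
  · rintro ⟨i, rfl⟩
    cases i using Fin.lastCases with
    | last => simp
    | cast j => simp [Fin.snoc_castSucc]
  · rintro (rfl | ⟨j, rfl⟩)
    · exact ⟨Fin.last n, by simp⟩
    · exact ⟨j.castSucc, by simp⟩

lemma rank_colApp_of_mem {r t : ℕ} (A : Matrix (Fin r) (Fin t) F) (v : Fin r → F)
    (h : v ∈ Submodule.span F (Set.range Aᵀ)) : (colApp A v).rank = A.rank := by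
  rw [Matrix.rank_eq_finrank_span_cols, Matrix.rank_eq_finrank_span_cols, colApp_col,
    range_snoc', Submodule.span_insert_eq_span h]
  rfl

lemma rank_colApp_of_not_mem {r t : ℕ} (A : Matrix (Fin r) (Fin t) F) (v : Fin r → F)
    (h : v ∉ Submodule.span F (Set.range Aᵀ)) : (colApp A v).rank = A.rank + 1 := by
  classical
  rw [Matrix.rank_eq_finrank_span_cols, Matrix.rank_eq_finrank_span_cols, colApp_col,
    range_snoc', Submodule.span_insert]
  change _ = finrank F ↥(Submodule.span F (Set.range Aᵀ)) + 1
  set W := Submodule.span F (Set.range Aᵀ) with hW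
  have hv0 : v ≠ 0 := fun h0 => h (h0 ▸ W.zero_mem)
  have hvW : v ∈ (F ∙ v) ⊔ W := Submodule.mem_sup_left (Submodule.mem_span_singleton_self v)
  have hlt : W < (F ∙ v) ⊔ W :=
    lt_of_le_not_ge le_sup_right fun hle => h (hle hvW)
  have h1 : finrank F W < finrank F ↥((F ∙ v) ⊔ W) := Submodule.finrank_lt_finrank_of_lt hlt
  have h2 : finrank F ↥((F ∙ v) ⊔ W) ≤ finrank F ↥(F ∙ v) + finrank F W :=
    Submodule.finrank_add_le_finrank_add_finrank _ _
  rw [finrank_span_singleton hv0] at h2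
  omega

lemma rank_colApp_zero {r t : ℕ} (A : Matrix (Fin r) (Fin t) F) :
    (colApp A (0 : Fin r → F)).rank = A.rank :=
  rank_colApp_of_mem A 0 (Submodule.zero_mem _)

lemma sum_rank_colApp {r t : ℕ} (B : Matrix (Fin r) (Fin t) F) :
    (∑ v : Fin r → F, (colApp B v).rank) + Fintype.card F ^ B.rank
      = Fintype.card F ^ r * B.rank + Fintype.card F ^ r := by
  classical
  set W := Submodule.span F (Set.range Bᵀ) with hW
  have hsub : (Finset.univ.filter (fun v : Fin r → F => v ∈ W)).card
      = Fintype.card F ^ B.rank := by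
    rw [← Fintype.card_subtype]
    rw [B.rank_eq_finrank_span_cols]
    change Fintype.card ↥W = Fintype.card F ^ finrank F ↥W
    exact Module.card_eq_pow_finrank (K := F)
  have h1 : ∑ v : Fin r → F, (colApp B v).rank
      = ∑ v : Fin r → F, (B.rank + if v ∈ W then 0 else 1) := by
    refine Finset.sum_congr rfl fun v _ => ?_
    by_cases hv : v ∈ W
    · rw [rank_colApp_of_mem B v (hW ▸ hv), if_pos hv, add_zero]
    · rw [rank_colApp_of_not_mem B v (hW ▸ hv), if_neg hv]
  have h2 : ∑ v : Fin r → F, (B.rank + if v ∈ W then (0:ℕ) else 1)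
      = Fintype.card F ^ r * B.rank
        + (Finset.univ.filter (fun v : Fin r → F => ¬ v ∈ W)).card := by
    rw [Finset.sum_add_distrib, Finset.sum_const, Finset.card_univ]
    congr 1
    · simp [mul_comm, Fintype.card_fun]
    · rw [Finset.card_filter]
      exact Finset.sum_congr rfl fun v _ => by by_cases hv : v ∈ W <;> simp [hv]
  have h3 : (Finset.univ.filter (fun v : Fin r → F => v ∈ W)).card
      + (Finset.univ.filter (fun v : Fin r → F => ¬ v ∈ W)).card
      = Fintype.card F ^ r := by
    rw [Finset.card_filter_add_card_filter_not, Finset.card_univ]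
    simp [Fintype.card_fun]
  rw [h1, h2, ← hsub, add_assoc, add_comm (Finset.univ.filter (fun v : Fin r → F => ¬ v ∈ W)).card, ← add_assoc]
  rw [add_assoc, h3]
set_option linter.unusedSectionVars false

section S2
variable {F : Type} [Field F] [Fintype F] [DecidableEq F]

/-- the 0/1 diagonal matrix built from `ω`. -/
def Dm (F : Type) [Field F] [Fintype F] [DecidableEq F] (t : ℕ) (ω : ℕ → Bool) :
    Matrix (Fin t) (Fin t) F :=
  Matrix.diagonal (fun j : Fin t => if ω (j : ℕ) then (1 : F) else 0)

/-- sum of ranks -/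
noncomputable def Srk (F : Type) [Field F] [Fintype F] [DecidableEq F] (r t : ℕ) (ω : ℕ → Bool) : ℕ :=
  ∑ R : Matrix (Fin r) (Fin t) F, (R * Dm F t ω).rank

/-- sum of `q ^ rank` -/
noncomputable def Tq (F : Type) [Field F] [Fintype F] [DecidableEq F] (r t : ℕ) (ω : ℕ → Bool) : ℕ :=
  ∑ R : Matrix (Fin r) (Fin t) F, Fintype.card F ^ (R * Dm F t ω).rank

lemma cardM (r t : ℕ) : Fintype.card (Matrix (Fin r) (Fin t) F) = Fintype.card F ^ (r * t) := by
  show Fintype.card (Fin r → Fin t → F) = _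
  rw [Fintype.card_fun, Fintype.card_fun, Fintype.card_fin, Fintype.card_fin, ← pow_mul, mul_comm]

/-- the column-splitting equivalence -/
def eqC (F : Type) [Field F] [Fintype F] [DecidableEq F] (r t : ℕ) :
    (Matrix (Fin r) (Fin t) F × (Fin r → F)) ≃ Matrix (Fin r) (Fin (t + 1)) F where
  toFun p := colApp p.1 p.2
  invFun M := (Matrix.of fun i j => M i j.castSucc, fun i => M i (Fin.last t))
  left_inv p := by
    refine Prod.ext ?_ ?_
    · ext i j
      exact colApp_castSucc _ _ i j
    · ext i
      exact colApp_last _ _ i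
  right_inv M := by
    ext i j
    cases j using Fin.lastCases with
    | last => exact colApp_last _ _ i
    | cast j => exact colApp_castSucc _ _ i j

lemma colApp_mul_Dm {r t : ℕ} (A : Matrix (Fin r) (Fin t) F) (v : Fin r → F) (ω : ℕ → Bool) :
    colApp A v * Dm F (t + 1) ω = colApp (A * Dm F t ω) (if ω t then v else 0) := by
  ext i j
  rw [Dm, Matrix.mul_diagonal]
  cases j using Fin.lastCases with
  | last =>
    have h1 : (colApp A v) i (Fin.last t) = v i := by
      exact colApp_last _ _ i
    have h2 : (colApp (A * Dm F t ω) (if ω t then v else 0)) i (Fin.last t)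
        = (if ω t then v else 0) i := by
      exact colApp_last _ _ i
    rw [h1, h2, Fin.val_last]
    by_cases h : ω t <;> simp [h]
  | cast j =>
    have h1 : (colApp A v) i j.castSucc = A i j := by
      exact colApp_castSucc _ _ i j
    have h2 : (colApp (A * Dm F t ω) (if ω t then v else 0)) i j.castSucc
        = (A * Dm F t ω) i j := by
      exact colApp_castSucc _ _ i j
    rw [h1, h2, Dm, Matrix.mul_diagonal, Fin.coe_castSucc]

lemma Srk_succ (r t : ℕ) (ω : ℕ → Bool) :
    Srk F r (t + 1) ω + (if ω t then Tq F r t ω else 0)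
      = Fintype.card F ^ r * Srk F r t ω
        + (if ω t then Fintype.card F ^ (r * t) * Fintype.card F ^ r else 0) := by
  classical
  have hsum : Srk F r (t + 1) ω
      = ∑ p : Matrix (Fin r) (Fin t) F × (Fin r → F),
          (colApp (p.1 * Dm F t ω) (if ω t then p.2 else 0)).rank := by
    rw [Srk, ← Equiv.sum_comp (eqC F r t) (fun M => (M * Dm F (t + 1) ω).rank)]
    exact Finset.sum_congr rfl fun p _ => by rw [show eqC F r t p = colApp p.1 p.2 from rfl,
      colApp_mul_Dm]
  by_cases h : ω t
  · simp only [h, if_true] at hsum ⊢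
    rw [hsum, Fintype.sum_prod_type, Tq, ← Finset.sum_add_distrib]
    have : ∀ A : Matrix (Fin r) (Fin t) F,
        (∑ v : Fin r → F, (colApp (A * Dm F t ω) v).rank)
            + Fintype.card F ^ (A * Dm F t ω).rank
          = Fintype.card F ^ r * (A * Dm F t ω).rank + Fintype.card F ^ r :=
      fun A => sum_rank_colApp _
    rw [Finset.sum_congr rfl fun A _ => this A, Finset.sum_add_distrib, Finset.sum_const,
      Finset.card_univ, cardM, Srk, Finset.mul_sum, smul_eq_mul]
  · simp only [h, if_false, add_zero] at hsum ⊢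
    rw [hsum, Fintype.sum_prod_type]
    have : ∀ A : Matrix (Fin r) (Fin t) F, ∀ v : Fin r → F,
        (colApp (A * Dm F t ω) (0 : Fin r → F)).rank = (A * Dm F t ω).rank :=
      fun A _ => rank_colApp_zero _
    calc ∑ A : Matrix (Fin r) (Fin t) F, ∑ v : Fin r → F,
            (colApp (A * Dm F t ω) (0 : Fin r → F)).rank
        = ∑ A : Matrix (Fin r) (Fin t) F, ∑ _v : Fin r → F, (A * Dm F t ω).rank := by
          exact Finset.sum_congr rfl fun A _ => Finset.sum_congr rfl fun v _ => this A v
      _ = Fintype.card F ^ r * Srk F r t ω := by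
          simp only [Finset.sum_const, Finset.card_univ, smul_eq_mul, Srk, Finset.mul_sum]
          congr 1
          ext A
          rw [Fintype.card_fun]
          simp [mul_comm]
end S2
section S3
variable {F : Type} [Field F] [Fintype F] [DecidableEq F]

/-- append a row -/
def rowApp {r t : ℕ} (M : Matrix (Fin r) (Fin t) F) (u : Fin t → F) :
    Matrix (Fin (r + 1)) (Fin t) F := Matrix.of (Fin.snoc M u)

lemma rowApp_castSucc {r t : ℕ} (M : Matrix (Fin r) (Fin t) F) (u : Fin t → F) (i : Fin r) :
    rowApp M u i.castSucc = M i := by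
  show (Fin.snoc M u : Fin (r+1) → Fin t → F) i.castSucc = M i
  exact Fin.snoc_castSucc (α := fun _ => Fin t → F) (p := fun i => M i) (x := u) (i := i)

lemma rowApp_last {r t : ℕ} (M : Matrix (Fin r) (Fin t) F) (u : Fin t → F) :
    rowApp M u (Fin.last r) = u := by
  show (Fin.snoc M u : Fin (r+1) → Fin t → F) (Fin.last r) = u
  exact Fin.snoc_last (α := fun _ => Fin t → F) (p := fun i => M i) (x := u)

/-- the row-splitting equivalence -/
def eqR (F : Type) [Field F] [Fintype F] [DecidableEq F] (r t : ℕ) :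
    (Matrix (Fin r) (Fin t) F × (Fin t → F)) ≃ Matrix (Fin (r + 1)) (Fin t) F where
  toFun p := rowApp p.1 p.2
  invFun M := (Matrix.of (Fin.init M), M (Fin.last r))
  left_inv p := by
    refine Prod.ext ?_ ?_
    · ext i j
      show (Fin.init (Fin.snoc p.1 p.2 : Fin (r+1) → Fin t → F)) i j = p.1 i j
      exact congrFun (congrFun (Fin.init_snoc (α := fun _ => Fin t → F) (p := fun i => p.1 i)
        (x := p.2)) i) j
    · show (Fin.snoc p.1 p.2 : Fin (r+1) → Fin t → F) (Fin.last r) = p.2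
      exact Fin.snoc_last (α := fun _ => Fin t → F) (p := fun i => p.1 i) (x := p.2)
  right_inv M := by
    ext i j
    show rowApp (Matrix.of (Fin.init M)) (M (Fin.last r)) i j = M i j
    cases i using Fin.lastCases with
    | last => rw [rowApp_last]
    | cast i => rw [rowApp_castSucc]; rfl

lemma rowApp_mul_Dm {r t : ℕ} (M : Matrix (Fin r) (Fin t) F) (u : Fin t → F) (ω : ℕ → Bool) :
    rowApp M u * Dm F t ω
      = rowApp (M * Dm F t ω) (fun j : Fin t => u j * (if ω (j : ℕ) then (1 : F) else 0)) := by
  ext i j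
  simp only [Dm, Matrix.mul_diagonal]
  cases i using Fin.lastCases with
  | last => rw [rowApp_last, rowApp_last]
  | cast i =>
    rw [rowApp_castSucc, rowApp_castSucc]; simp only [Dm, Matrix.mul_diagonal]

lemma transpose_rowApp {r t : ℕ} (B : Matrix (Fin r) (Fin t) F) (w : Fin t → F) :
    (rowApp B w)ᵀ = colApp Bᵀ w := by
  rw [colApp, Matrix.transpose_transpose]
  rfl

lemma rank_rowApp_le {r t : ℕ} (B : Matrix (Fin r) (Fin t) F) (w : Fin t → F) :
    (rowApp B w).rank ≤ B.rank + 1 := by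
  classical
  rw [← Matrix.rank_transpose (rowApp B w), ← Matrix.rank_transpose B, transpose_rowApp]
  by_cases h : w ∈ Submodule.span F (Set.range Bᵀᵀ)
  · rw [rank_colApp_of_mem _ _ h]; omega
  · rw [rank_colApp_of_not_mem _ _ h]

lemma rank_rowApp_zero {r t : ℕ} (B : Matrix (Fin r) (Fin t) F) :
    (rowApp B (0 : Fin t → F)).rank = B.rank := by
  rw [← Matrix.rank_transpose (rowApp B (0 : Fin t → F)), ← Matrix.rank_transpose B,
    transpose_rowApp, rank_colApp_zero]

lemma Tq_succ_le (r t : ℕ) (ω : ℕ → Bool) :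
    Tq F (r + 1) t ω + Fintype.card F * Tq F r t ω
      ≤ (Fintype.card F ^ (t + 1) + 1) * Tq F r t ω := by
  classical
  set q := Fintype.card F with hq
  have hq1 : 1 ≤ q := Fintype.card_pos
  have hsum : Tq F (r + 1) t ω
      = ∑ p : Matrix (Fin r) (Fin t) F × (Fin t → F),
          q ^ (rowApp (p.1 * Dm F t ω)
            (fun j : Fin t => p.2 j * (if ω (j : ℕ) then (1 : F) else 0))).rank := by
    rw [Tq, ← Equiv.sum_comp (eqR F r t) (fun M => q ^ (M * Dm F t ω).rank)]
    exact Finset.sum_congr rfl fun p _ => by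
      rw [show eqR F r t p = rowApp p.1 p.2 from rfl, rowApp_mul_Dm]
  have key : ∀ A : Matrix (Fin r) (Fin t) F,
      (∑ u : Fin t → F,
          q ^ (rowApp (A * Dm F t ω)
            (fun j : Fin t => u j * (if ω (j : ℕ) then (1 : F) else 0))).rank)
        + q * q ^ (A * Dm F t ω).rank
      ≤ (q ^ (t + 1) + 1) * q ^ (A * Dm F t ω).rank := by
    intro A
    set B := A * Dm F t ω with hB
    set ρ := B.rank with hρ
    have hzero : (fun j : Fin t => (0 : Fin t → F) j * (if ω (j : ℕ) then (1 : F) else 0))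
        = (0 : Fin t → F) := by
      funext j; simp
    have hsplit : ∑ u : Fin t → F,
        q ^ (rowApp B (fun j : Fin t => u j * (if ω (j : ℕ) then (1 : F) else 0))).rank
        = (∑ u ∈ Finset.univ.erase (0 : Fin t → F),
            q ^ (rowApp B (fun j : Fin t => u j * (if ω (j : ℕ) then (1 : F) else 0))).rank)
          + q ^ ρ := by
      rw [← Finset.sum_erase_add Finset.univ _ (Finset.mem_univ (0 : Fin t → F))]
      congr 1
      rw [hzero, rank_rowApp_zero]
    have hbound : ∑ u ∈ Finset.univ.erase (0 : Fin t → F),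
        q ^ (rowApp B (fun j : Fin t => u j * (if ω (j : ℕ) then (1 : F) else 0))).rank
        ≤ (q ^ t - 1) * (q ^ ρ * q) := by
      have hc : (Finset.univ.erase (0 : Fin t → F)).card = q ^ t - 1 := by
        rw [Finset.card_erase_of_mem (Finset.mem_univ _), Finset.card_univ, Fintype.card_fun,
          Fintype.card_fin]
      calc ∑ u ∈ Finset.univ.erase (0 : Fin t → F),
            q ^ (rowApp B (fun j : Fin t => u j * (if ω (j : ℕ) then (1 : F) else 0))).rank
          ≤ ∑ _u ∈ Finset.univ.erase (0 : Fin t → F), q ^ ρ * q := by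
            refine Finset.sum_le_sum fun u _ => ?_
            calc q ^ (rowApp B
                  (fun j : Fin t => u j * (if ω (j : ℕ) then (1 : F) else 0))).rank
                ≤ q ^ (ρ + 1) := Nat.pow_le_pow_right hq1 (rank_rowApp_le B _)
              _ = q ^ ρ * q := by rw [pow_succ]
        _ = (q ^ t - 1) * (q ^ ρ * q) := by rw [Finset.sum_const, hc, smul_eq_mul]
    have hqt : 1 ≤ q ^ t := Nat.one_le_pow _ _ hq1
    calc (∑ u : Fin t → F,
          q ^ (rowApp B (fun j : Fin t => u j * (if ω (j : ℕ) then (1 : F) else 0))).rank)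
          + q * q ^ ρ
        ≤ ((q ^ t - 1) * (q ^ ρ * q) + q ^ ρ) + q * q ^ ρ := by
          rw [hsplit]; exact Nat.add_le_add_right (Nat.add_le_add_right hbound _) _
      _ = ((q ^ t - 1) * (q ^ ρ * q) + (q ^ ρ * q)) + q ^ ρ := by ring_nf
      _ = q ^ t * (q ^ ρ * q) + q ^ ρ := by
          rw [← add_one_mul, Nat.sub_add_cancel hqt]
      _ = (q ^ (t + 1) + 1) * q ^ ρ := by ring
  calc Tq F (r + 1) t ω + q * Tq F r t ω
      = ∑ A : Matrix (Fin r) (Fin t) F,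
          ((∑ u : Fin t → F,
            q ^ (rowApp (A * Dm F t ω)
              (fun j : Fin t => u j * (if ω (j : ℕ) then (1 : F) else 0))).rank)
            + q * q ^ (A * Dm F t ω).rank) := by
        rw [hsum, Fintype.sum_prod_type, Tq, Finset.mul_sum, ← Finset.sum_add_distrib]
    _ ≤ ∑ A : Matrix (Fin r) (Fin t) F, (q ^ (t + 1) + 1) * q ^ (A * Dm F t ω).rank :=
        Finset.sum_le_sum fun A _ => key A
    _ = (q ^ (t + 1) + 1) * Tq F r t ω := by rw [Tq, Finset.mul_sum]

lemma le_Tq (r t : ℕ) (ω : ℕ → Bool) : Fintype.card F ^ (r * t) ≤ Tq F r t ω := by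
  classical
  calc Fintype.card F ^ (r * t)
      = ∑ _R : Matrix (Fin r) (Fin t) F, 1 := by
        rw [Finset.sum_const, Finset.card_univ, cardM, smul_eq_mul, mul_one]
    _ ≤ Tq F r t ω := Finset.sum_le_sum fun R _ => Nat.one_le_pow _ _ Fintype.card_pos
end S3
section S4
variable {F : Type} [Field F] [Fintype F] [DecidableEq F]

/-- the integrand of `Estat`. -/
noncomputable def gg (F : Type) [Field F] [Fintype F] [DecidableEq F] (r t : ℕ)
    (ω : ℕ → Bool) : ℝ :=
  (∑ R : Matrix (Fin r) (Fin t) F,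
      ((R * Matrix.diagonal (fun j : Fin t => if ω (j : ℕ) then (1 : F) else 0)).rank : ℝ)) /
    (Fintype.card (Matrix (Fin r) (Fin t) F) : ℝ)

/-- the increment integrand. -/
noncomputable def phif (F : Type) [Field F] [Fintype F] [DecidableEq F] (r t : ℕ)
    (ω : ℕ → Bool) : ℝ :=
  if ω t then 1 - (Tq F r t ω : ℝ) / (Fintype.card F : ℝ) ^ (r * t + r) else 0

lemma gg_eq (r t : ℕ) (ω : ℕ → Bool) :
    gg F r t ω = (Srk F r t ω : ℝ) / (Fintype.card F : ℝ) ^ (r * t) := by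
  simp only [gg, Srk, Dm, cardM, Nat.cast_sum, Nat.cast_pow]

lemma gg_succ (r t : ℕ) (ω : ℕ → Bool) :
    gg F r (t + 1) ω = gg F r t ω + phif F r t ω := by
  have hq0 : (0 : ℝ) < (Fintype.card F : ℝ) := by exact_mod_cast Fintype.card_pos
  have hcast := Srk_succ (F := F) r t ω
  rw [gg_eq, gg_eq, phif]
  have hexp : ((Fintype.card F : ℝ)) ^ (r * (t + 1))
      = (Fintype.card F : ℝ) ^ (r * t) * (Fintype.card F : ℝ) ^ r := by
    rw [← pow_add]; ring_nf
  have hexp2 : ((Fintype.card F : ℝ)) ^ (r * t + r)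
      = (Fintype.card F : ℝ) ^ (r * t) * (Fintype.card F : ℝ) ^ r := by
    rw [← pow_add]
  by_cases h : ω t
  · simp only [h, if_true] at hcast ⊢
    have hc : (Srk F r (t + 1) ω : ℝ) + (Tq F r t ω : ℝ)
        = (Fintype.card F : ℝ) ^ r * (Srk F r t ω : ℝ)
          + (Fintype.card F : ℝ) ^ (r * t) * (Fintype.card F : ℝ) ^ r := by
      exact_mod_cast hcast
    have hS1 : (Srk F r (t + 1) ω : ℝ)
        = (Fintype.card F : ℝ) ^ r * (Srk F r t ω : ℝ)
          + (Fintype.card F : ℝ) ^ (r * t) * (Fintype.card F : ℝ) ^ r - (Tq F r t ω : ℝ) := by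
      linarith
    rw [hS1, hexp, hexp2]
    field_simp
    ring
  · simp only [h, Bool.false_eq_true, if_false, add_zero] at hcast ⊢
    have hc : (Srk F r (t + 1) ω : ℝ)
        = (Fintype.card F : ℝ) ^ r * (Srk F r t ω : ℝ) := by exact_mod_cast hcast
    rw [hc, hexp]
    field_simp

lemma phif_gap (r t : ℕ) (ω : ℕ → Bool) (h : ω t = true) :
    phif F r t ω + ((Fintype.card F : ℝ) - 1) / (Fintype.card F : ℝ) ^ (r + t + 1)
      ≤ phif F (r + 1) t ω := by
  have hq0 : (0 : ℝ) < (Fintype.card F : ℝ) := by exact_mod_cast Fintype.card_pos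
  have hq2 : (2 : ℝ) ≤ (Fintype.card F : ℝ) := by exact_mod_cast Fintype.one_lt_card
  have hT : (Tq F (r + 1) t ω : ℝ) + (Fintype.card F : ℝ) * (Tq F r t ω : ℝ)
      ≤ ((Fintype.card F : ℝ) ^ (t + 1) + 1) * (Tq F r t ω : ℝ) := by
    exact_mod_cast Tq_succ_le (F := F) r t ω
  have hTP : (Fintype.card F : ℝ) ^ (r * t) ≤ (Tq F r t ω : ℝ) := by
    exact_mod_cast le_Tq (F := F) r t ω
  set q : ℝ := (Fintype.card F : ℝ) with hqdef
  have hP : (0 : ℝ) < q ^ (r * t) := pow_pos hq0 _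
  have hQ : (0 : ℝ) < q ^ r := pow_pos hq0 _
  have hU : (0 : ℝ) < q ^ (t + 1) := pow_pos hq0 _
  simp only [phif, h, if_true]
  have hexp1 : q ^ (r * t + r) = q ^ (r * t) * q ^ r := by rw [← pow_add]
  have hexp2 : q ^ ((r + 1) * t + (r + 1)) = q ^ (r * t) * q ^ r * q ^ (t + 1) := by
    rw [← pow_add, ← pow_add]; ring_nf
  have hexp3 : q ^ (r + t + 1) = q ^ r * q ^ (t + 1) := by rw [← pow_add]; ring_nf
  rw [hexp1, hexp2, hexp3]
  have key : (Tq F (r + 1) t ω : ℝ)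
      ≤ (Tq F r t ω : ℝ) * q ^ (t + 1) - (q - 1) * q ^ (r * t) := by
    have h1 : (q - 1) * q ^ (r * t) ≤ (q - 1) * (Tq F r t ω : ℝ) :=
      mul_le_mul_of_nonneg_left hTP (by linarith)
    nlinarith [hT, h1]
  have h1 : (Tq F (r + 1) t ω : ℝ) / (q ^ (r * t) * q ^ r * q ^ (t + 1))
      ≤ ((Tq F r t ω : ℝ) * q ^ (t + 1) - (q - 1) * q ^ (r * t))
          / (q ^ (r * t) * q ^ r * q ^ (t + 1)) := by
    gcongr
  have h2 : ((Tq F r t ω : ℝ) * q ^ (t + 1) - (q - 1) * q ^ (r * t))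
        / (q ^ (r * t) * q ^ r * q ^ (t + 1))
      = (Tq F r t ω : ℝ) / (q ^ (r * t) * q ^ r)
        - (q - 1) / (q ^ r * q ^ (t + 1)) := by
    field_simp
  linarith
end S4
section S5
open MeasureTheory
variable {F : Type} [Field F] [Fintype F] [DecidableEq F]

lemma integrable_cyl (μ : Measure (ℕ → Bool)) [IsProbabilityMeasure μ] (n : ℕ)
    (f : (Fin n → Bool) → ℝ) :
    Integrable (fun ω : ℕ → Bool => f (fun j : Fin n => ω (j : ℕ))) μ := by
  have hmeas : Measurable (fun ω : ℕ → Bool => f (fun j : Fin n => ω (j : ℕ))) :=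
    (measurable_of_finite f).comp (measurable_pi_lambda _ fun j => measurable_pi_apply _)
  refine Integrable.mono' (integrable_const (∑ x : Fin n → Bool, ‖f x‖))
    hmeas.aestronglyMeasurable ?_
  refine Filter.Eventually.of_forall fun ω => ?_
  exact Finset.single_le_sum (f := fun x : Fin n → Bool => ‖f x‖)
    (fun _ _ => norm_nonneg _) (Finset.mem_univ _)

lemma integrable_gg (μ : Measure (ℕ → Bool)) [IsProbabilityMeasure μ] (r t : ℕ) :
    Integrable (gg F r t) μ := by
  have := integrable_cyl μ t (fun x : Fin t → Bool =>
    (∑ R : Matrix (Fin r) (Fin t) F,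
      ((R * Matrix.diagonal (fun j : Fin t => if x j then (1 : F) else 0)).rank : ℝ)) /
    (Fintype.card (Matrix (Fin r) (Fin t) F) : ℝ))
  exact this

lemma integrable_phif (μ : Measure (ℕ → Bool)) [IsProbabilityMeasure μ] (r t : ℕ) :
    Integrable (phif F r t) μ := by
  have := integrable_cyl μ (t + 1) (fun x : Fin (t + 1) → Bool =>
    if x (Fin.last t) then
      1 - ((∑ R : Matrix (Fin r) (Fin t) F,
          Fintype.card F ^ (R * Matrix.diagonal
            (fun j : Fin t => if x j.castSucc then (1 : F) else 0)).rank : ℕ) : ℝ)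
        / (Fintype.card F : ℝ) ^ (r * t + r)
    else 0)
  exact this

end S5
section S6
open MeasureTheory
variable {F : Type} [Field F] [Fintype F] [DecidableEq F]

lemma Estat_eq (μ : Measure (ℕ → Bool)) (r t : ℕ) :
    Estat F μ r t = ∫ ω, gg F r t ω ∂μ := rfl

lemma Estat_diff (μ : Measure (ℕ → Bool)) [IsProbabilityMeasure μ] (r t : ℕ) :
    Estat F μ r (t + 1) - Estat F μ r t = ∫ ω, phif F r t ω ∂μ := by
  have h1 : Estat F μ r (t + 1) = ∫ ω, (gg F r t ω + phif F r t ω) ∂μ := by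
    rw [Estat_eq]
    exact integral_congr_ae (Filter.Eventually.of_forall fun ω => gg_succ r t ω)
  rw [h1, integral_add (integrable_gg μ r t) (integrable_phif μ r t), Estat_eq]
  ring

theorem Estat_increment_mono_in_r'
    (μ : Measure (ℕ → Bool)) [IsProbabilityMeasure μ] (r t : ℕ) :
    (Estat F μ r (t + 1) - Estat F μ r t
      ≤ Estat F μ (r + 1) (t + 1) - Estat F μ (r + 1) t)
    ∧ (μ {ω | ω t = true} ≠ 0 →
        Estat F μ r (t + 1) - Estat F μ r t
          < Estat F μ (r + 1) (t + 1) - Estat F μ (r + 1) t) := by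
  classical
  have hq0 : (0 : ℝ) < (Fintype.card F : ℝ) := by exact_mod_cast Fintype.card_pos
  have hq2 : (2 : ℝ) ≤ (Fintype.card F : ℝ) := by exact_mod_cast Fintype.one_lt_card
  set ε : ℝ := ((Fintype.card F : ℝ) - 1) / (Fintype.card F : ℝ) ^ (r + t + 1) with hε
  have hεpos : 0 < ε := by
    apply div_pos (by linarith) (pow_pos hq0 _)
  set S : Set (ℕ → Bool) := {ω | ω t = true} with hSdef
  have hS : MeasurableSet S := by
    have : Measurable fun ω : ℕ → Bool => ω t := measurable_pi_apply t
    exact this (measurableSet_singleton true)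
  have hgap : ∀ ω : ℕ → Bool,
      phif F r t ω + S.indicator (fun _ => ε) ω ≤ phif F (r + 1) t ω := by
    intro ω
    by_cases h : ω t = true
    · rw [Set.indicator_of_mem (by exact h : ω ∈ S)]
      exact phif_gap r t ω h
    · rw [Set.indicator_of_notMem (by exact h : ω ∉ S), add_zero]
      simp only [phif, h, if_false]
      simp [eq_false_of_ne_true h]
  have hind_nonneg : ∀ ω : ℕ → Bool, 0 ≤ S.indicator (fun _ : ℕ → Bool => ε) ω :=
    fun ω => Set.indicator_nonneg (fun _ _ => hεpos.le) ω
  constructor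
  · rw [Estat_diff, Estat_diff]
    exact integral_mono (integrable_phif μ r t) (integrable_phif μ (r + 1) t)
      fun ω => le_trans (le_add_of_nonneg_right (hind_nonneg ω)) (hgap ω)
  · intro hμ
    rw [Estat_diff, Estat_diff]
    have hint_ind : Integrable (S.indicator fun _ : ℕ → Bool => ε) μ :=
      (integrable_const ε).indicator hS
    have h3 : (∫ ω, phif F r t ω ∂μ) + ∫ ω, S.indicator (fun _ : ℕ → Bool => ε) ω ∂μ
        ≤ ∫ ω, phif F (r + 1) t ω ∂μ := by
      rw [← integral_add (integrable_phif μ r t) hint_ind]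
      exact integral_mono ((integrable_phif μ r t).add hint_ind)
        (integrable_phif μ (r + 1) t) hgap
    have h4 : (∫ ω, S.indicator (fun _ : ℕ → Bool => ε) ω ∂μ) = (μ S).toReal * ε := by
      rw [integral_indicator_const ε hS, smul_eq_mul, measureReal_def]
    have h5 : 0 < (μ S).toReal := ENNReal.toReal_pos hμ (measure_ne_top μ S)
    nlinarith [mul_pos h5 hεpos]
end S6

/-- Under a stationary loss process, the single-step expected-rank gain
`Δ_{r,t} := E_r(t+1) − E_r(t)` is nondecreasing in the rank `r`:
`E_{r+1}(t+1) − E_{r+1}(t) ≥ E_r(t+1) − E_r(t)`; since `q` is finite,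
if `Pr(Z_{t+1} = 1) ≠ 0` then the inequality is strict. -/
theorem Estat_increment_mono_in_r
    (F : Type) [Field F] [Fintype F] [DecidableEq F]
    (μ : Measure (ℕ → Bool)) [IsProbabilityMeasure μ]
    (hstat : ∀ k : ℕ, μ.map (fun ω n => ω (n + k)) = μ) (r t : ℕ) :
    (Estat F μ r (t + 1) - Estat F μ r t
      ≤ Estat F μ (r + 1) (t + 1) - Estat F μ (r + 1) t)
    ∧ (μ {ω | ω t = true} ≠ 0 →
        Estat F μ r (t + 1) - Estat F μ r t
          < Estat F μ (r + 1) (t + 1) - Estat F μ (r + 1) t) :=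
  Estat_increment_mono_in_r' μ r t
end

section
/- Jensen reduction: Let E_r : ℝ≥0 → ℝ be concave and nondecreasing for each r ∈ {0,…,M}, and extend integer-valued E_r by linear interpolation. For any probability distributions {α_{t|r}}_{t∈ℕ} (r ∈ {0,…,M}) with finite means t_r := Σ_t t·α_{t|r} satisfying Σ_r h_r t_r = t_avg, the objective satisfies Σ_r h_r Σ_t α_{t|r} E_r(t) ≤ Σ_r h_r E_r(t_r). Consequently, an optimizer of the finite-dimensional problem max Σ_r h_r E_r(t_r) subject to Σ_r h_r t_r = t_avg, t_r ≥ 0 induces an optimizer of the infinite-dimensional problem over distributions, with each optimal α_{·|r} supported on at most the two consecutive integers ⌊t_r⌋ and ⌊t_r⌋+1. -/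
/-- Linear interpolation of a function defined on the naturals to nonnegative reals:
`E(x) = (x − ⌊x⌋)·E(⌊x⌋+1) + (1 − (x − ⌊x⌋))·E(⌊x⌋)`. -/
noncomputable def interp (E : ℕ → ℝ) (x : ℝ) : ℝ :=
  (x - (⌊x⌋ : ℝ)) * E (⌊x⌋.toNat + 1) + (1 - (x - (⌊x⌋ : ℝ))) * E ⌊x⌋.toNat

lemma supline (E : ℕ → ℝ) (hconc : ∀ t, E (t + 2) - E (t + 1) ≤ E (t + 1) - E t)
    (n t : ℕ) : E t ≤ E n + ((t : ℝ) - n) * (E (n + 1) - E n) := by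
  set D : ℕ → ℝ := fun k => E (k + 1) - E k with hD
  have hanti : Antitone D := antitone_nat_of_succ_le (fun k => hconc k)
  rcases le_total n t with hnt | htn
  · -- t ≥ n
    have key : ∀ m, n ≤ m → E m - E n ≤ ((m - n : ℕ) : ℝ) * D n := by
      intro m hm
      induction m, hm using Nat.le_induction with
      | base => simp
      | succ m hm ih =>
        have h1 : D m ≤ D n := hanti hm
        have : E (m + 1) - E n = (E m - E n) + D m := by simp only [hD]; ring
        rw [this]
        have hcard : ((m + 1 - n : ℕ) : ℝ) = ((m - n : ℕ) : ℝ) + 1 := by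
          have : m + 1 - n = (m - n) + 1 := by omega
          rw [this]; push_cast; ring
        rw [hcard]
        nlinarith
    have := key t hnt
    have hc : ((t - n : ℕ) : ℝ) = (t : ℝ) - n := by
      have : (n : ℝ) ≤ t := by exact_mod_cast hnt
      push_cast [Nat.cast_sub hnt]; ring
    rw [hc] at this
    have hDn : D n = E (n + 1) - E n := rfl
    linarith [this, hDn ▸ this]
  · -- t ≤ n
    have key : ∀ m, t ≤ m → ((m - t : ℕ) : ℝ) * D m ≤ E m - E t := by
      intro m hm
      induction m, hm using Nat.le_induction with
      | base => simp
      | succ m hm ih =>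
        have h1 : D (m + 1) ≤ D m := hanti (Nat.le_succ m)
        have h2 : E (m + 1) - E t = (E m - E t) + D m := by simp only [hD]; ring
        have hcard : ((m + 1 - t : ℕ) : ℝ) = ((m - t : ℕ) : ℝ) + 1 := by
          have : m + 1 - t = (m - t) + 1 := by omega
          rw [this]; push_cast; ring
        rw [h2, hcard]
        have hnn : (0:ℝ) ≤ ((m - t : ℕ) : ℝ) := Nat.cast_nonneg _
        nlinarith
    have := key n htn
    have hc : ((n - t : ℕ) : ℝ) = (n : ℝ) - t := by
      push_cast [Nat.cast_sub htn]; ring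
    rw [hc] at this
    have hDn : D n = E (n + 1) - E n := rfl
    rw [hDn] at this
    nlinarith [this]

lemma jensen_single (E : ℕ → ℝ) (hconc : ∀ t, E (t + 2) - E (t + 1) ≤ E (t + 1) - E t)
    (α : ℕ → ℝ) (hα0 : ∀ t, 0 ≤ α t) (hαs : Summable α) (hα1 : ∑' t, α t = 1)
    (hts : Summable (fun t : ℕ => (t : ℝ) * α t))
    (hEs : Summable (fun t => α t * E t)) :
    ∑' t, α t * E t ≤ interp E (∑' t : ℕ, (t : ℝ) * α t) := by
  set m : ℝ := ∑' t : ℕ, (t : ℝ) * α t with hm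
  have hm0 : 0 ≤ m := tsum_nonneg (fun t => mul_nonneg (Nat.cast_nonneg t) (hα0 t))
  set n : ℕ := ⌊m⌋.toNat with hn
  have hfl : ((⌊m⌋ : ℤ) : ℝ) = (n : ℝ) := by
    rw [hn]
    exact_mod_cast (Int.toNat_of_nonneg (Int.floor_nonneg.mpr hm0)).symm
  set D : ℝ := E (n + 1) - E n with hDdef
  set c : ℝ := E n - (n : ℝ) * D with hc
  have hpt : ∀ t : ℕ, α t * E t ≤ c * α t + D * ((t : ℝ) * α t) := by
    intro t
    have := supline E hconc n t
    have h2 : c * α t + D * ((t : ℝ) * α t) = α t * (E n + ((t:ℝ) - n) * D) := by ring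
    rw [h2]
    exact mul_le_mul_of_nonneg_left this (hα0 t)
  have hrs : Summable (fun t : ℕ => c * α t + D * ((t : ℝ) * α t)) :=
    (hαs.mul_left c).add (hts.mul_left D)
  have h1 : ∑' t, α t * E t ≤ ∑' t : ℕ, (c * α t + D * ((t : ℝ) * α t)) :=
    Summable.tsum_le_tsum hpt hEs hrs
  have h2 : ∑' t : ℕ, (c * α t + D * ((t : ℝ) * α t)) = c + D * m := by
    rw [Summable.tsum_add (hαs.mul_left c) (hts.mul_left D), tsum_mul_left, tsum_mul_left, hα1, ← hm]
    ring
  have h3 : interp E m = c + D * m := by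
    rw [interp, hfl, ← hn, hc, hDdef]; ring
  rw [h3]; linarith

lemma summable_pair (n : ℕ) (F : ℕ → ℝ) (h0 : ∀ t, t ≠ n → t ≠ n + 1 → F t = 0) :
    Summable F := by
  apply summable_of_ne_finset_zero (s := ({n, n + 1} : Finset ℕ))
  intro b hb
  simp only [Finset.mem_insert, Finset.mem_singleton] at hb
  push_neg at hb
  exact h0 b hb.1 hb.2

lemma tsum_pair (n : ℕ) (F : ℕ → ℝ) (h0 : ∀ t, t ≠ n → t ≠ n + 1 → F t = 0) :
    ∑' t, F t = F n + F (n + 1) := by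
  rw [tsum_eq_sum (s := ({n, n + 1} : Finset ℕ)) ?_]
  · rw [Finset.sum_pair (by omega)]
  · intro b hb
    simp only [Finset.mem_insert, Finset.mem_singleton] at hb
    push_neg at hb
    exact h0 b hb.1 hb.2

/-- Jensen reduction: with `E_r` concave and nondecreasing,
(1) for any per-rank distributions `α_{·|r}` with finite means `t_r` meeting the budget,
`Σ_r h_r Σ_t α_{t|r} E_r(t) ≤ Σ_r h_r E_r(t_r)`; and
(2) an optimizer `{t_r}` of the finite-dimensional problem induces an optimizer `α*` of the
infinite-dimensional problem, supported for each `r` on `{⌊t_r⌋, ⌊t_r⌋+1}`. -/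
theorem jensen_reduction
    (M : ℕ) (h : ℕ → ℝ) (hh0 : ∀ r, 0 ≤ h r)
    (hh1 : ∑ r ∈ Finset.range (M + 1), h r = 1)
    (E : ℕ → ℕ → ℝ)
    (hconc : ∀ r t, E r (t + 2) - E r (t + 1) ≤ E r (t + 1) - E r t)
    (hmono : ∀ r t, E r t ≤ E r (t + 1))
    (tavg : ℝ) (htavg : 0 ≤ tavg) :
    (∀ α : ℕ → ℕ → ℝ,
      (∀ r t, 0 ≤ α r t) →
      (∀ r, Summable (α r)) →
      (∀ r, ∑' t, α r t = 1) →
      (∀ r, Summable (fun t : ℕ => (t : ℝ) * α r t)) →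
      (∑ r ∈ Finset.range (M + 1), h r * ∑' t : ℕ, (t : ℝ) * α r t) = tavg →
      (∀ r, Summable (fun t => α r t * E r t)) →
      ∑ r ∈ Finset.range (M + 1), h r * ∑' t, α r t * E r t
        ≤ ∑ r ∈ Finset.range (M + 1), h r * interp (E r) (∑' t : ℕ, (t : ℝ) * α r t))
    ∧
    (∀ tr : ℕ → ℝ,
      (∀ r, 0 ≤ tr r) →
      (∑ r ∈ Finset.range (M + 1), h r * tr r) = tavg →
      (∀ s : ℕ → ℝ, (∀ r, 0 ≤ s r) →
        (∑ r ∈ Finset.range (M + 1), h r * s r) = tavg →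
        ∑ r ∈ Finset.range (M + 1), h r * interp (E r) (s r)
          ≤ ∑ r ∈ Finset.range (M + 1), h r * interp (E r) (tr r)) →
      ∃ αstar : ℕ → ℕ → ℝ,
        (∀ r t, αstar r t =
          if t = ⌊tr r⌋.toNat + 1 then tr r - (⌊tr r⌋ : ℝ)
          else if t = ⌊tr r⌋.toNat then 1 - (tr r - (⌊tr r⌋ : ℝ)) else 0)
        ∧ (∀ r t, 0 ≤ αstar r t)
        ∧ (∀ r, ∑' t, αstar r t = 1)
        ∧ (∑ r ∈ Finset.range (M + 1), h r * ∑' t : ℕ, (t : ℝ) * αstar r t) = tavg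
        ∧ (∀ r t, αstar r t ≠ 0 → t = ⌊tr r⌋.toNat ∨ t = ⌊tr r⌋.toNat + 1)
        ∧ (∀ α : ℕ → ℕ → ℝ,
            (∀ r t, 0 ≤ α r t) →
            (∀ r, Summable (α r)) →
            (∀ r, ∑' t, α r t = 1) →
            (∀ r, Summable (fun t : ℕ => (t : ℝ) * α r t)) →
            (∑ r ∈ Finset.range (M + 1), h r * ∑' t : ℕ, (t : ℝ) * α r t) = tavg →
            (∀ r, Summable (fun t => α r t * E r t)) →
            ∑ r ∈ Finset.range (M + 1), h r * ∑' t, α r t * E r t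
              ≤ ∑ r ∈ Finset.range (M + 1), h r * ∑' t, αstar r t * E r t)) := by
  have part1 : ∀ α : ℕ → ℕ → ℝ,
      (∀ r t, 0 ≤ α r t) →
      (∀ r, Summable (α r)) →
      (∀ r, ∑' t, α r t = 1) →
      (∀ r, Summable (fun t : ℕ => (t : ℝ) * α r t)) →
      (∑ r ∈ Finset.range (M + 1), h r * ∑' t : ℕ, (t : ℝ) * α r t) = tavg →
      (∀ r, Summable (fun t => α r t * E r t)) →
      ∑ r ∈ Finset.range (M + 1), h r * ∑' t, α r t * E r t
        ≤ ∑ r ∈ Finset.range (M + 1), h r * interp (E r) (∑' t : ℕ, (t : ℝ) * α r t) := by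
    intro α hα0 hαs hα1 hts _ hEs
    refine Finset.sum_le_sum (fun r _ => ?_)
    exact mul_le_mul_of_nonneg_left
      (jensen_single (E r) (hconc r) (α r) (hα0 r) (hαs r) (hα1 r) (hts r) (hEs r)) (hh0 r)
  refine ⟨part1, ?_⟩
  intro tr htr0 htrbud hopt
  set αstar : ℕ → ℕ → ℝ := fun r t =>
    if t = ⌊tr r⌋.toNat + 1 then tr r - (⌊tr r⌋ : ℝ)
    else if t = ⌊tr r⌋.toNat then 1 - (tr r - (⌊tr r⌋ : ℝ)) else 0 with hαdef
  have hfl : ∀ r, ((⌊tr r⌋ : ℤ) : ℝ) = ((⌊tr r⌋.toNat : ℕ) : ℝ) := fun r => by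
    exact_mod_cast (Int.toNat_of_nonneg (Int.floor_nonneg.mpr (htr0 r))).symm
  have hf0 : ∀ r, 0 ≤ tr r - (⌊tr r⌋ : ℝ) := fun r => by
    have := Int.floor_le (tr r); linarith
  have hf1 : ∀ r, tr r - (⌊tr r⌋ : ℝ) ≤ 1 := fun r => by
    have := Int.lt_floor_add_one (tr r); linarith
  have hz : ∀ r t, t ≠ ⌊tr r⌋.toNat → t ≠ ⌊tr r⌋.toNat + 1 → αstar r t = 0 := by
    intro r t h1 h2; simp [hαdef, h1, h2]
  have hvaln : ∀ r, αstar r ⌊tr r⌋.toNat = 1 - (tr r - (⌊tr r⌋ : ℝ)) := by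
    intro r; simp [hαdef]
  have hvaln1 : ∀ r, αstar r (⌊tr r⌋.toNat + 1) = tr r - (⌊tr r⌋ : ℝ) := by
    intro r; simp [hαdef]
  have hnn : ∀ r t, 0 ≤ αstar r t := by
    intro r t
    by_cases h1 : t = ⌊tr r⌋.toNat + 1
    · rw [h1, hvaln1]; exact hf0 r
    by_cases h2 : t = ⌊tr r⌋.toNat
    · rw [h2, hvaln]; linarith [hf1 r]
    · rw [hz r t h2 h1]
  have hsum1 : ∀ r, ∑' t, αstar r t = 1 := by
    intro r
    rw [tsum_pair ⌊tr r⌋.toNat _ (hz r), hvaln, hvaln1]; ring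
  have hmean : ∀ r, ∑' t : ℕ, (t : ℝ) * αstar r t = tr r := by
    intro r
    rw [tsum_pair ⌊tr r⌋.toNat (fun t => (t : ℝ) * αstar r t)
      (fun t h1 h2 => by simp only [hz r t h1 h2, mul_zero]), hvaln, hvaln1]
    push_cast
    rw [← hfl r]
    ring
  have hobj : ∀ r, ∑' t, αstar r t * E r t = interp (E r) (tr r) := by
    intro r
    rw [tsum_pair ⌊tr r⌋.toNat (fun t => αstar r t * E r t)
      (fun t h1 h2 => by simp only [hz r t h1 h2, zero_mul]), hvaln, hvaln1, interp]
    ring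
  refine ⟨αstar, fun r t => rfl, hnn, hsum1, ?_, ?_, ?_⟩
  · simp_rw [hmean]; exact htrbud
  · intro r t hne
    by_contra hc
    push_neg at hc
    exact hne (hz r t hc.1 hc.2)
  · intro α hα0 hαs hα1 hts hbud hEs
    have h1 := part1 α hα0 hαs hα1 hts hbud hEs
    have hm0 : ∀ r, 0 ≤ ∑' t : ℕ, (t : ℝ) * α r t := fun r =>
      tsum_nonneg (fun t => mul_nonneg (Nat.cast_nonneg t) (hα0 r t))
    have h2 := hopt (fun r => ∑' t : ℕ, (t : ℝ) * α r t) hm0 hbud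
    have h3 : ∑ r ∈ Finset.range (M + 1), h r * interp (E r) (tr r)
        = ∑ r ∈ Finset.range (M + 1), h r * ∑' t, αstar r t * E r t := by
      refine Finset.sum_congr rfl (fun r _ => ?_)
      rw [hobj r]
    linarith
end

section
/- Multiset characterization (necessity): Define Δ_{r,t} := E_r(t+1) − E_r(t) and Ω_r(x) := the multiset {Δ_{r,t} : t < x, t ∈ ℕ}. If {t_r}_{r=0}^{M} is an optimal solution of max Σ_r h_r E_r(t_r) s.t. Σ_r h_r t_r = t_avg, t_r ≥ 0, and S := {r : h_r ≠ 0}, then ⊎_{r∈S} Ω_r(t_r) is a collection of the Σ_{r∈S} ⌈t_r⌉ largest elements of the multiset ⊎_{r∈S} Ω_r(∞). -/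
open Finset Function

lemma antitone_increment {E : ℕ → ℝ} (hE : ∀ t, E (t + 2) - E (t + 1) ≤ E (t + 1) - E t) :
    Antitone fun t => E (t + 1) - E t :=
  antitone_nat_of_succ_le hE

lemma interp_eq_of_mem_Icc (E : ℕ → ℝ) {k : ℕ} {x : ℝ} (hx : x ∈ Set.Icc (k : ℝ) (k + 1)) :
    interp E x = E k + (x - k) * (E (k + 1) - E k) := by
  rcases hx.2.lt_or_eq with hlt | rfl
  · have hfloor : ⌊x⌋ = k := Int.floor_eq_iff.mpr ⟨by exact_mod_cast hx.1, by exact_mod_cast hlt⟩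
    simp only [interp, hfloor, Int.toNat_natCast, Int.cast_natCast]
    ring
  · have hfloor : ⌊(k : ℝ) + 1⌋ = ((k + 1 : ℕ) : ℤ) := by exact_mod_cast Int.floor_natCast (k + 1)
    simp only [interp, hfloor, Int.toNat_natCast, Int.cast_natCast]
    push_cast
    ring

lemma interp_sub_interp_of_mem_Icc (E : ℕ → ℝ) {k : ℕ} {x y : ℝ}
    (hx : x ∈ Set.Icc (k : ℝ) (k + 1)) (hy : y ∈ Set.Icc (k : ℝ) (k + 1)) :
    interp E y - interp E x = (y - x) * (E (k + 1) - E k) := by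
  rw [interp_eq_of_mem_Icc E hx, interp_eq_of_mem_Icc E hy]
  ring

lemma exists_nat_lt_le_add_one {x : ℝ} (hx : 0 < x) : ∃ c : ℕ, (c : ℝ) < x ∧ x ≤ c + 1 := by
  have hceil : 1 ≤ ⌈x⌉₊ := Nat.one_le_iff_ne_zero.mpr (Nat.ceil_pos.mpr hx).ne'
  refine ⟨⌈x⌉₊ - 1, ?_, ?_⟩ <;> rw [Nat.cast_sub hceil, Nat.cast_one]
  · linarith [Nat.ceil_lt_add_one hx.le]
  · linarith [Nat.le_ceil x]

lemma exists_pos_mul_le_and_mul_le {p q α β : ℝ} (hp : 0 < p) (hq : 0 < q) (hα : 0 < α)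
    (hβ : 0 < β) : ∃ δ > 0, p * δ ≤ α ∧ q * δ ≤ β :=
  ⟨min (α / p) (β / q), by positivity,
    (le_div_iff₀' hp).mp (min_le_left _ _), (le_div_iff₀' hq).mp (min_le_right _ _)⟩

lemma sum_update_update_sub_sum {S : Finset ℕ} {m n : ℕ} (hm : m ∈ S) (hn : n ∈ S) (hmn : m ≠ n)
    (φ : ℕ → ℝ → ℝ) (t : ℕ → ℝ) (x y : ℝ) :
    ∑ r ∈ S, φ r (update (update t m x) n y r) - ∑ r ∈ S, φ r (t r)
      = (φ m x - φ m (t m)) + (φ n y - φ n (t n)) := by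
  rw [← sum_sub_distrib, sum_eq_add_of_mem m n hm hn hmn]
  · simp [update_of_ne hmn]
  · rintro r - ⟨hrm, hrn⟩
    simp [update_of_ne hrm, update_of_ne hrn]

section Exchange

variable {S : Finset ℕ} {h : ℕ → ℝ} {t : ℕ → ℝ} {tavg : ℝ}

lemma exchange_le_of_optimal {F : ℕ → ℝ → ℝ} (ht0 : ∀ r, 0 ≤ t r)
    (ht : ∑ r ∈ S, h r * t r = tavg)
    (hopt : ∀ s : ℕ → ℝ, (∀ r, 0 ≤ s r) → ∑ r ∈ S, h r * s r = tavg →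
      ∑ r ∈ S, h r * F r (s r) ≤ ∑ r ∈ S, h r * F r (t r))
    {m n : ℕ} (hm : m ∈ S) (hn : n ∈ S) (hmn : m ≠ n) {δ : ℝ}
    (hsm : 0 ≤ t m - h n * δ) (hsn : 0 ≤ t n + h m * δ) :
    h n * (F n (t n + h m * δ) - F n (t n)) ≤ h m * (F m (t m) - F m (t m - h n * δ)) := by
  set s := update (update t m (t m - h n * δ)) n (t n + h m * δ)
  have hs0 : ∀ r, 0 ≤ s r := by
    intro r
    simp only [s, update_apply]
    split_ifs <;> first | assumption | exact ht0 r
  have hbudget : ∑ r ∈ S, h r * s r = tavg := by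
    have := sum_update_update_sub_sum hm hn hmn (fun r x => h r * x) t
      (t m - h n * δ) (t n + h m * δ)
    linarith
  have hgain := sum_update_update_sub_sum hm hn hmn (fun r x => h r * F r x) t
    (t m - h n * δ) (t n + h m * δ)
  linarith [hopt s hs0 hbudget]

lemma increment_le_increment_of_optimal {E : ℕ → ℕ → ℝ} (ht0 : ∀ r, 0 ≤ t r)
    (ht : ∑ r ∈ S, h r * t r = tavg)
    (hopt : ∀ s : ℕ → ℝ, (∀ r, 0 ≤ s r) → ∑ r ∈ S, h r * s r = tavg →
      ∑ r ∈ S, h r * interp (E r) (s r) ≤ ∑ r ∈ S, h r * interp (E r) (t r))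
    {m n : ℕ} (hm : m ∈ S) (hn : n ∈ S) (hmn : m ≠ n) (hm0 : 0 < h m) (hn0 : 0 < h n)
    {c d : ℕ} (hc : (c : ℝ) < t m) (hc' : t m ≤ c + 1) (hd : (d : ℝ) ≤ t n)
    (hd' : t n < d + 1) :
    E n (d + 1) - E n d ≤ E m (c + 1) - E m c := by
  obtain ⟨δ, hδ, hδm, hδn⟩ :=
    exists_pos_mul_le_and_mul_le hn0 hm0 (sub_pos.mpr hc) (sub_pos.mpr hd')
  have hmδ := mul_pos hm0 hδ
  have hnδ := mul_pos hn0 hδ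
  have hexch := exchange_le_of_optimal ht0 ht hopt hm hn hmn
    (by linarith [(Nat.cast_nonneg c : (0 : ℝ) ≤ c)]) (by linarith)
  rw [interp_sub_interp_of_mem_Icc (E n) ⟨hd, hd'.le⟩ ⟨by linarith, by linarith⟩,
    interp_sub_interp_of_mem_Icc (E m) ⟨by linarith, by linarith⟩ ⟨hc.le, hc'⟩] at hexch
  have hpos : 0 < h m * h n * δ := by positivity
  exact le_of_mul_le_mul_left (by linarith) hpos

end Exchange

theorem multiset_characterization_necessity_general
    (M : ℕ) (h : ℕ → ℝ) (hh0 : ∀ r, 0 ≤ h r)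
    (E : ℕ → ℕ → ℝ)
    (hconc : ∀ r t, E r (t + 2) - E r (t + 1) ≤ E r (t + 1) - E r t)
    (tavg : ℝ)
    (tr : ℕ → ℝ)
    (hfeas0 : ∀ r, 0 ≤ tr r)
    (hfeas : (∑ r ∈ Finset.range (M + 1), h r * tr r) = tavg)
    (hopt : ∀ s : ℕ → ℝ, (∀ r, 0 ≤ s r) →
      (∑ r ∈ Finset.range (M + 1), h r * s r) = tavg →
      ∑ r ∈ Finset.range (M + 1), h r * interp (E r) (s r)
        ≤ ∑ r ∈ Finset.range (M + 1), h r * interp (E r) (tr r)) :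
    ∀ m ∈ Finset.range (M + 1), ∀ n ∈ Finset.range (M + 1),
      h m ≠ 0 → h n ≠ 0 → ∀ a b : ℕ, (a : ℝ) < tr m → tr n ≤ (b : ℝ) →
        E n (b + 1) - E n b ≤ E m (a + 1) - E m a := by
  intro m hm n hn hm0 hn0 a b ha hb
  rcases eq_or_ne m n with rfl | hmn
  · exact antitone_increment (hconc m) (by exact_mod_cast (ha.trans_le hb).le : a ≤ b)
  obtain ⟨c, hc, hc'⟩ := exists_nat_lt_le_add_one ((Nat.cast_nonneg a).trans_lt ha)
  have hac : a ≤ c := by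
    have : (a : ℝ) < c + 1 := ha.trans_le hc'
    exact Nat.lt_succ_iff.mp (by exact_mod_cast this)
  calc E n (b + 1) - E n b
      ≤ E n (⌊tr n⌋₊ + 1) - E n ⌊tr n⌋₊ := antitone_increment (hconc n) (Nat.floor_le_of_le hb)
    _ ≤ E m (c + 1) - E m c :=
      increment_le_increment_of_optimal hfeas0 hfeas hopt hm hn hmn
        ((hh0 m).lt_of_ne' hm0) ((hh0 n).lt_of_ne' hn0) hc hc'
        (Nat.floor_le (hfeas0 n)) (Nat.lt_floor_add_one (tr n))
    _ ≤ E m (a + 1) - E m a := antitone_increment (hconc m) hac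

/-- Multiset characterization, necessity: with `Δ_{r,t} := E_r(t+1) − E_r(t)`
and `Ω_r(x) := {Δ_{r,t} : (t:ℝ) < x}`, if `{t_r}` is optimal then `⊎_{r∈S} Ω_r(t_r)`
consists of the largest elements of `⊎_{r∈S} Ω_r(∞)`: every selected element
`Δ_{m,a}` (with `m ∈ S`, `(a:ℝ) < t_m`) is at least every unselected element `Δ_{n,b}`
(with `n ∈ S`, `(b:ℝ) ≥ t_n`). -/
theorem multiset_characterization_necessity
    (M : ℕ) (h : ℕ → ℝ) (hh0 : ∀ r, 0 ≤ h r)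
    (hh1 : ∑ r ∈ Finset.range (M + 1), h r = 1)
    (E : ℕ → ℕ → ℝ)
    (hconc : ∀ r t, E r (t + 2) - E r (t + 1) ≤ E r (t + 1) - E r t)
    (hmono : ∀ r t, E r t ≤ E r (t + 1))
    (hzero : ∀ r, E r 0 = 0)
    (tavg : ℝ) (htavg : 0 ≤ tavg)
    (tr : ℕ → ℝ)
    (hfeas0 : ∀ r, 0 ≤ tr r)
    (hfeas : (∑ r ∈ Finset.range (M + 1), h r * tr r) = tavg)
    (hopt : ∀ s : ℕ → ℝ, (∀ r, 0 ≤ s r) →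
      (∑ r ∈ Finset.range (M + 1), h r * s r) = tavg →
      ∑ r ∈ Finset.range (M + 1), h r * interp (E r) (s r)
        ≤ ∑ r ∈ Finset.range (M + 1), h r * interp (E r) (tr r)) :
    ∀ m ∈ Finset.range (M + 1), ∀ n ∈ Finset.range (M + 1),
      h m ≠ 0 → h n ≠ 0 → ∀ a b : ℕ, (a : ℝ) < tr m → tr n ≤ (b : ℝ) →
        E n (b + 1) - E n b ≤ E m (a + 1) - E m a :=
  multiset_characterization_necessity_general M h hh0 E hconc tavg tr hfeas0 hfeas hopt
end

section
/- Multiset characterization (sufficiency): With notation as above, suppose a feasible solution {t_r}_{r=0}^M satisfies: (i) at most one t_r with r ∈ S is a non-integer, and a non-integer t_r occurs only at an r with Δ_{r,⌈t_r−1⌉} = min ⊎_{r∈S} Ω_r(t_r); and (ii) ⊎_{r∈S} Ω_r(t_r) consists of the Σ_{r∈S} ⌈t_r⌉ largest elements of ⊎_{r∈S} Ω_r(∞). Then {t_r} is an optimal solution of max Σ_r h_r E_r(t_r) subject to Σ_r h_r t_r = t_avg, t_r ≥ 0. -/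
lemma toNat_cast_of_nonneg {y : ℝ} (hy : 0 ≤ y) : ((⌊y⌋.toNat : ℕ) : ℝ) = (⌊y⌋ : ℝ) := by
  exact_mod_cast congrArg (Int.cast : ℤ → ℝ) (Int.toNat_of_nonneg (Int.floor_nonneg.mpr hy))

lemma interp_eq (E : ℕ → ℝ) (x : ℝ) (hx : 0 ≤ x) :
    interp E x = E ⌊x⌋.toNat + (x - (⌊x⌋.toNat : ℝ)) * (E (⌊x⌋.toNat + 1) - E ⌊x⌋.toNat) := by
  unfold interp
  rw [← toNat_cast_of_nonneg hx]
  ring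

lemma interp_nat (E : ℕ → ℝ) (n : ℕ) : interp E (n : ℝ) = E n := by
  simp [interp]

lemma toNat_floor_le {y : ℝ} (hy : 0 ≤ y) : ((⌊y⌋.toNat : ℕ) : ℝ) ≤ y := by
  rw [toNat_cast_of_nonneg hy]; exact Int.floor_le y

lemma toNat_floor_lt {y : ℝ} (hy : 0 ≤ y) : y < ((⌊y⌋.toNat : ℕ) : ℝ) + 1 := by
  rw [toNat_cast_of_nonneg hy]; exact Int.lt_floor_add_one y

lemma toNat_floor_eq {y : ℝ} {n : ℕ} (h1 : (n : ℝ) ≤ y) (h2 : y < (n : ℝ) + 1) :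
    ⌊y⌋.toNat = n := by
  have : ⌊y⌋ = (n : ℤ) := by
    apply Int.floor_eq_iff.mpr
    constructor <;> push_cast <;> [exact h1; exact h2]
  simp [this]

lemma delta_anti (E : ℕ → ℝ) (hconc : ∀ t, E (t + 2) - E (t + 1) ≤ E (t + 1) - E t)
    {a b : ℕ} (hab : a ≤ b) : E (b + 1) - E b ≤ E (a + 1) - E a := by
  induction hab with
  | refl => exact le_rfl
  | @step m _ ih => exact (hconc m).trans ih

lemma supergrad (E : ℕ → ℝ) (hconc : ∀ t, E (t + 2) - E (t + 1) ≤ E (t + 1) - E t)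
    (t lam : ℝ) (ht : 0 ≤ t)
    (hL : ∀ a : ℕ, (a : ℝ) < t → lam ≤ E (a + 1) - E a)
    (hR : ∀ b : ℕ, t ≤ (b : ℝ) → E (b + 1) - E b ≤ lam)
    (hN : (¬ ∃ n : ℕ, t = (n : ℝ)) → E (⌊t⌋.toNat + 1) - E ⌊t⌋.toNat ≤ lam)
    (x : ℝ) (hx : 0 ≤ x) :
    interp E x ≤ interp E t + lam * (x - t) := by
  set m : ℕ := ⌊t⌋.toNat with hmdef
  have hmle : (m : ℝ) ≤ t := toNat_floor_le ht
  have hmlt : t < (m : ℝ) + 1 := toNat_floor_lt ht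
  have hIt : interp E t = E m + (t - (m : ℝ)) * (E (m + 1) - E m) := interp_eq E t ht
  -- claim 1 : for naturals n ≥ t, E n ≤ interp E t + lam * (n - t)
  have claim1 : ∀ n : ℕ, t ≤ (n : ℝ) → E n ≤ interp E t + lam * ((n : ℝ) - t) := by
    intro n
    induction n with
    | zero =>
      intro h0
      have ht0 : t = 0 := le_antisymm (by exact_mod_cast h0) ht
      rw [ht0]
      have : interp E (0 : ℝ) = E 0 := by exact_mod_cast interp_nat E 0
      simp [this]
    | succ n ih =>
      intro hsn
      by_cases hn : t ≤ (n : ℝ)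
      · have h1 := ih hn
        have h2 := hR n hn
        have : ((n + 1 : ℕ) : ℝ) = (n : ℝ) + 1 := by push_cast; ring
        rw [this]
        linarith
      · push_neg at hn
        by_cases heq : t = ((n + 1 : ℕ) : ℝ)
        · rw [heq, interp_nat]
          simp
        · have hlt : t < (n : ℝ) + 1 := by
            rcases lt_or_eq_of_le hsn with h' | h'
            · push_cast at h'; linarith
            · exact absurd h' heq
          have hmn : m = n := toNat_floor_eq (le_of_lt hn) hlt
          have hni : ¬ ∃ k : ℕ, t = (k : ℝ) := by
            rintro ⟨k, rfl⟩
            have h1 : n < k := by exact_mod_cast hn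
            have h2 : (k : ℝ) ≤ (n : ℝ) + 1 := by linarith
            have h3 : k ≤ n + 1 := by exact_mod_cast h2
            have : k = n + 1 := by omega
            exact heq (by exact_mod_cast congrArg (Nat.cast : ℕ → ℝ) this)
          have hd := hN hni
          rw [hmn] at hd
          rw [hmn] at hIt
          have hnn : (0 : ℝ) ≤ (n : ℝ) + 1 - t := by linarith
          have := mul_le_mul_of_nonneg_left hd hnn
          have hcast : ((n + 1 : ℕ) : ℝ) = (n : ℝ) + 1 := by push_cast; ring
          rw [hcast]
          nlinarith
  -- claim 2 : for naturals n ≤ m, E n + lam * (t - n) ≤ interp E t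
  have claim2 : ∀ j : ℕ, j ≤ m → E (m - j) + lam * (t - ((m - j : ℕ) : ℝ)) ≤ interp E t := by
    intro j
    induction j with
    | zero =>
      intro _
      simp only [Nat.sub_zero]
      rcases eq_or_lt_of_le hmle with h' | h'
      · rw [hIt, ← h']; simp
      · have := hL m h'
        nlinarith [mul_le_mul_of_nonneg_left this (by linarith : (0:ℝ) ≤ t - (m:ℝ))]
    | succ j ih =>
      intro hj
      have hj' : j ≤ m := by omega
      have key : m - (j + 1) + 1 = m - j := by omega
      have hlt : ((m - (j + 1) : ℕ) : ℝ) < t := by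
        have : ((m - (j + 1) : ℕ) : ℝ) < (m : ℝ) := by exact_mod_cast (by omega : m - (j+1) < m)
        linarith
      have hd := hL _ hlt
      have hc : ((m - (j + 1) + 1 : ℕ) : ℝ) = ((m - (j + 1) : ℕ) : ℝ) + 1 := by push_cast; ring
      have ihm := ih hj'
      rw [← key] at ihm
      rw [hc] at ihm
      linarith [hd, ihm]
  have claim2' : ∀ n : ℕ, n ≤ m → E n + lam * (t - (n : ℝ)) ≤ interp E t := by
    intro n hn
    have := claim2 (m - n) (by omega)
    rwa [Nat.sub_sub_self hn] at this
  -- main proof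
  set b : ℕ := ⌊x⌋.toNat with hbdef
  have hble : (b : ℝ) ≤ x := toNat_floor_le hx
  have hblt : x < (b : ℝ) + 1 := toNat_floor_lt hx
  have hIx : interp E x = E b + (x - (b : ℝ)) * (E (b + 1) - E b) := interp_eq E x hx
  rcases le_or_gt t x with htx | htx
  · by_cases hb : t ≤ (b : ℝ)
    · have h1 := claim1 b hb
      have h2 := hR b hb
      have h3 := mul_le_mul_of_nonneg_left h2 (by linarith : (0:ℝ) ≤ x - (b : ℝ))
      nlinarith
    · push_neg at hb
      have hmb : m = b := toNat_floor_eq (le_of_lt hb) (by linarith)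
      rcases eq_or_lt_of_le htx with h' | h'
      · rw [← h']; simp
      · have hni : ¬ ∃ k : ℕ, t = (k : ℝ) := by
          rintro ⟨k, rfl⟩
          have h1 : b < k := by exact_mod_cast hb
          have h2 : (k : ℝ) < (b : ℝ) + 1 := by linarith
          have h3 : k < b + 1 := by exact_mod_cast h2
          omega
        have hd := hN hni
        rw [hmb] at hd
        rw [hmb] at hIt
        nlinarith [mul_le_mul_of_nonneg_left hd (by linarith : (0:ℝ) ≤ x - t)]
  · by_cases hb1 : ((b : ℝ) + 1) ≤ t
    · have hb1m : b + 1 ≤ m := by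
        have : ((b:ℝ) + 1) < (m : ℝ) + 1 := lt_of_le_of_lt hb1 hmlt
        have : (b : ℝ) < (m : ℝ) := by linarith
        exact_mod_cast (by exact_mod_cast this : (b:ℕ) < m)
      have h1 := claim2' b (by omega)
      have h2 := claim2' (b + 1) (by omega)
      have hc : ((b + 1 : ℕ) : ℝ) = (b : ℝ) + 1 := by push_cast; ring
      rw [hc] at h2
      have hθ0 : (0:ℝ) ≤ x - (b : ℝ) := by linarith
      have hθ1 : x - (b : ℝ) ≤ 1 := by linarith
      nlinarith [mul_le_mul_of_nonneg_left h1 (by linarith : (0:ℝ) ≤ 1 - (x - (b:ℝ))),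
        mul_le_mul_of_nonneg_left h2 hθ0]
    · push_neg at hb1
      have hmb : m = b := toNat_floor_eq (le_trans hble (le_of_lt htx)) hb1
      rw [hmb] at hIt
      have hbx : (b : ℝ) ≤ x := hble
      have hd := hL b (by linarith : (b : ℝ) < t)
      nlinarith [mul_le_mul_of_nonneg_left hd (by linarith : (0:ℝ) ≤ t - x)]

/-- Multiset characterization, sufficiency: with
`Δ_{r,t} := E_r(t+1) − E_r(t)` and `S := {r : h_r ≠ 0}`, suppose a feasible `{t_r}`
satisfies: (i) at most one `t_r` with `r ∈ S` is a non-integer, and a non-integer `t_r`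
occurs only at an `r` whose last selected element `Δ_{r,⌈t_r−1⌉} = Δ_{r,⌊t_r⌋}` is a
minimum of the selected multiset `⊎_{r∈S} Ω_r(t_r)`; and (ii) every selected element is
at least every unselected element. Then `{t_r}` is optimal. -/
theorem multiset_characterization_sufficiency
    (M : ℕ) (h : ℕ → ℝ) (hh0 : ∀ r, 0 ≤ h r)
    (hh1 : ∑ r ∈ Finset.range (M + 1), h r = 1)
    (E : ℕ → ℕ → ℝ)
    (hconc : ∀ r t, E r (t + 2) - E r (t + 1) ≤ E r (t + 1) - E r t)
    (hmono : ∀ r t, E r t ≤ E r (t + 1))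
    (hzero : ∀ r, E r 0 = 0)
    (tavg : ℝ)
    (tr : ℕ → ℝ)
    (hfeas0 : ∀ r, 0 ≤ tr r)
    (hfeas : (∑ r ∈ Finset.range (M + 1), h r * tr r) = tavg)
    -- (i) at most one non-integer on the rank support
    (hone : ∃ r0 : ℕ, ∀ r ∈ Finset.range (M + 1), h r ≠ 0 → r ≠ r0 →
      ∃ n : ℕ, tr r = (n : ℝ))
    -- (i) a non-integer coordinate has its last selected element minimal among selected
    (hmin : ∀ r ∈ Finset.range (M + 1), h r ≠ 0 → (¬ ∃ n : ℕ, tr r = (n : ℝ)) →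
      ∀ m ∈ Finset.range (M + 1), h m ≠ 0 → ∀ a : ℕ, (a : ℝ) < tr m →
        E r (⌊tr r⌋.toNat + 1) - E r ⌊tr r⌋.toNat ≤ E m (a + 1) - E m a)
    -- (ii) selected elements are the largest elements
    (hlargest : ∀ m ∈ Finset.range (M + 1), ∀ n ∈ Finset.range (M + 1),
      h m ≠ 0 → h n ≠ 0 → ∀ a b : ℕ, (a : ℝ) < tr m → tr n ≤ (b : ℝ) →
        E n (b + 1) - E n b ≤ E m (a + 1) - E m a) :
    ∀ s : ℕ → ℝ, (∀ r, 0 ≤ s r) →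
      (∑ r ∈ Finset.range (M + 1), h r * s r) = tavg →
      ∑ r ∈ Finset.range (M + 1), h r * interp (E r) (s r)
        ≤ ∑ r ∈ Finset.range (M + 1), h r * interp (E r) (tr r) := by
  intro s hs0 hsfeas
  by_cases hC : ∀ r ∈ Finset.range (M + 1), h r ≠ 0 → tr r = 0
  · -- all selected coordinates are zero; both objective values are zero
    have interp0 : ∀ r : ℕ, interp (E r) 0 = 0 := by
      intro r
      have : interp (E r) ((0 : ℕ) : ℝ) = E r 0 := interp_nat (E r) 0
      simpa [hzero r] using this
    have htavg : tavg = 0 := by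
      rw [← hfeas]
      apply Finset.sum_eq_zero
      intro r hr
      by_cases hhr : h r = 0
      · simp [hhr]
      · rw [hC r hr hhr]; ring
    have hsz : ∀ r ∈ Finset.range (M + 1), h r ≠ 0 → s r = 0 := by
      intro r hr hhr
      have hsum : ∑ i ∈ Finset.range (M + 1), h i * s i = 0 := by rw [hsfeas, htavg]
      have hterm : ∀ i ∈ Finset.range (M + 1), 0 ≤ h i * s i :=
        fun i _ => mul_nonneg (hh0 i) (hs0 i)
      have := (Finset.sum_eq_zero_iff_of_nonneg hterm).mp hsum r hr
      rcases mul_eq_zero.mp this with h' | h'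
      · exact absurd h' hhr
      · exact h'
    have e1 : ∑ r ∈ Finset.range (M + 1), h r * interp (E r) (s r) = 0 := by
      apply Finset.sum_eq_zero
      intro r hr
      by_cases hhr : h r = 0
      · simp [hhr]
      · rw [hsz r hr hhr, interp0 r]; ring
    have e2 : ∑ r ∈ Finset.range (M + 1), h r * interp (E r) (tr r) = 0 := by
      apply Finset.sum_eq_zero
      intro r hr
      by_cases hhr : h r = 0
      · simp [hhr]
      · rw [hC r hr hhr, interp0 r]; ring
    rw [e1, e2]
  · -- there is a supergradient slope lam
    obtain ⟨lam, hLu, hRu, hNu⟩ : ∃ lam : ℝ,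
        (∀ r ∈ Finset.range (M + 1), h r ≠ 0 → ∀ a : ℕ, (a : ℝ) < tr r →
          lam ≤ E r (a + 1) - E r a) ∧
        (∀ r ∈ Finset.range (M + 1), h r ≠ 0 → ∀ b : ℕ, tr r ≤ (b : ℝ) →
          E r (b + 1) - E r b ≤ lam) ∧
        (∀ r ∈ Finset.range (M + 1), h r ≠ 0 → (¬ ∃ n : ℕ, tr r = (n : ℝ)) →
          E r (⌊tr r⌋.toNat + 1) - E r ⌊tr r⌋.toNat ≤ lam) := by
      by_cases hA : ∃ r ∈ Finset.range (M + 1), h r ≠ 0 ∧ ¬ ∃ n : ℕ, tr r = (n : ℝ)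
      · obtain ⟨rs, hrs, hhs, hnis⟩ := hA
        refine ⟨E rs (⌊tr rs⌋.toNat + 1) - E rs ⌊tr rs⌋.toNat, ?_, ?_, ?_⟩
        · intro r hr hhr a ha
          exact hmin rs hrs hhs hnis r hr hhr a ha
        · intro r hr hhr b hb
          apply hlargest rs hrs r hr hhs hhr (⌊tr rs⌋.toNat) b ?_ hb
          have hne : ((⌊tr rs⌋.toNat : ℕ) : ℝ) ≠ tr rs := fun he => hnis ⟨_, he.symm⟩
          exact lt_of_le_of_ne (toNat_floor_le (hfeas0 rs)) hne
        · intro r hr hhr hni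
          obtain ⟨r0, hr0⟩ := hone
          have h1 : r = r0 := by
            by_contra h'
            exact hni (hr0 r hr hhr h')
          have h2 : rs = r0 := by
            by_contra h'
            exact hnis (hr0 rs hrs hhs h')
          rw [h1, ← h2]
      · push_neg at hA
        push_neg at hC
        obtain ⟨rb, hrb, hhb, htrb⟩ := hC
        set T : Finset ℕ := (Finset.range (M + 1)).filter (fun r => h r ≠ 0 ∧ 0 < tr r)
          with hTdef
        have hTne : T.Nonempty := by
          refine ⟨rb, Finset.mem_filter.mpr ⟨hrb, hhb, ?_⟩⟩
          exact lt_of_le_of_ne (hfeas0 rb) (Ne.symm htrb)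
        set g : ℕ → ℝ := fun r => E r ⌊tr r⌋.toNat - E r (⌊tr r⌋.toNat - 1) with hgdef
        -- facts about members of T
        have hTfact : ∀ r ∈ T, 1 ≤ ⌊tr r⌋.toNat ∧ tr r = ((⌊tr r⌋.toNat : ℕ) : ℝ) := by
          intro r hrT
          obtain ⟨hr, hhr, htr⟩ := Finset.mem_filter.mp hrT
          obtain ⟨n, hn⟩ := hA r hr hhr
          have hfl : ⌊tr r⌋.toNat = n := by
            rw [hn]; simp
          constructor
          · rw [hfl]
            have : (0 : ℝ) < (n : ℝ) := by rw [← hn]; exact htr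
            exact_mod_cast this
          · rw [hfl, ← hn]
        refine ⟨T.inf' hTne g, ?_, ?_, ?_⟩
        · intro r hr hhr a ha
          have hrT : r ∈ T := Finset.mem_filter.mpr ⟨hr, hhr,
            lt_of_le_of_lt (by exact_mod_cast Nat.zero_le a : (0:ℝ) ≤ (a:ℝ)) ha⟩
          obtain ⟨hn1, hn2⟩ := hTfact r hrT
          set n : ℕ := ⌊tr r⌋.toNat
          have hkey : n - 1 + 1 = n := by omega
          have han : a ≤ n - 1 := by
            have : (a : ℝ) < (n : ℝ) := by rw [← hn2]; exact ha
            have : a < n := by exact_mod_cast this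
            omega
          have h1 : T.inf' hTne g ≤ g r := Finset.inf'_le g hrT
          have h2 : E r (n - 1 + 1) - E r (n - 1) ≤ E r (a + 1) - E r a :=
            delta_anti (E r) (hconc r) han
          rw [hkey] at h2
          exact le_trans h1 h2
        · intro r hr hhr b hb
          obtain ⟨r0, hr0T, hg0⟩ := Finset.exists_mem_eq_inf' hTne g
          obtain ⟨hr0, hh0', htr0⟩ := Finset.mem_filter.mp hr0T
          obtain ⟨hn1, hn2⟩ := hTfact r0 hr0T
          set n0 : ℕ := ⌊tr r0⌋.toNat
          have hkey : n0 - 1 + 1 = n0 := by omega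
          have hlt : ((n0 - 1 : ℕ) : ℝ) < tr r0 := by
            rw [hn2]
            exact_mod_cast (by omega : n0 - 1 < n0)
          have := hlargest r0 hr0 r hr hh0' hhr (n0 - 1) b hlt hb
          rw [hkey] at this
          rw [hg0]
          exact this
        · intro r hr hhr hni
          exact absurd (hA r hr hhr) hni
    -- conclude using the supergradient inequality
    have step : ∀ r ∈ Finset.range (M + 1),
        h r * interp (E r) (s r) ≤
          h r * interp (E r) (tr r) + lam * (h r * s r - h r * tr r) := by
      intro r hr
      by_cases hhr : h r = 0
      · simp [hhr]
      · have hsg := supergrad (E r) (hconc r) (tr r) lam (hfeas0 r)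
          (hLu r hr hhr) (hRu r hr hhr) (hNu r hr hhr) (s r) (hs0 r)
        have := mul_le_mul_of_nonneg_left hsg (hh0 r)
        nlinarith [this]
    have hsum := Finset.sum_le_sum step
    have heq : ∑ r ∈ Finset.range (M + 1),
        (h r * interp (E r) (tr r) + lam * (h r * s r - h r * tr r))
        = ∑ r ∈ Finset.range (M + 1), h r * interp (E r) (tr r)
          + lam * ((∑ r ∈ Finset.range (M + 1), h r * s r)
            - ∑ r ∈ Finset.range (M + 1), h r * tr r) := by
      rw [Finset.sum_add_distrib]
      congr 1
      rw [← Finset.mul_sum, Finset.sum_sub_distrib]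
    rw [heq, hsfeas, hfeas, sub_self, mul_zero, add_zero] at hsum
    exact hsum
end

section
/- Monotonicity of optimal recoding numbers: Assume Δ_{r+1,t} > Δ_{r,t} for all r ∈ {0,…,M−1} and t ∈ ℕ, where Δ_{r,t} := E_r(t+1) − E_r(t). Then every optimal solution {t_r} of max Σ_r h_r E_r(t_r) s.t. Σ_r h_r t_r = t_avg, t_r ≥ 0 satisfies t_n ≥ t_m for all n > m with h_n, h_m ≠ 0 and t_m > 0. -/
lemma interp_on (E : ℕ → ℝ) (k : ℕ) (x : ℝ) (h1 : (k:ℝ) ≤ x) (h2 : x ≤ (k:ℝ)+1) :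
    interp E x = E k + (x - k) * (E (k+1) - E k) := by
  rcases lt_or_eq_of_le h2 with hlt | heq
  · have hf : ⌊x⌋ = (k:ℤ) := by
      rw [Int.floor_eq_iff]
      constructor
      · exact_mod_cast h1
      · push_cast; linarith
    simp only [interp, hf, Int.toNat_natCast, Int.cast_natCast]
    ring
  · have hf : ⌊x⌋ = (k:ℤ) + 1 := by
      rw [Int.floor_eq_iff]
      constructor
      · push_cast; linarith
      · push_cast; linarith
    simp only [interp, hf]
    rw [show ((k:ℤ)+1).toNat = k + 1 by omega]
    push_cast
    rw [heq]; ring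

lemma diff_anti (E : ℕ → ℝ) (hconc : ∀ t, E (t + 2) - E (t + 1) ≤ E (t + 1) - E t) :
    ∀ j k : ℕ, j ≤ k → E (k+1) - E k ≤ E (j+1) - E j := by
  have := antitone_nat_of_succ_le (f := fun t => E (t+1) - E t) (fun t => hconc t)
  exact fun j k hjk => this hjk

lemma diff_chain (M : ℕ) (E : ℕ → ℕ → ℝ)
    (hstrict : ∀ r, r < M → ∀ t : ℕ,
      E r (t + 1) - E r t < E (r + 1) (t + 1) - E (r + 1) t) :
    ∀ m n : ℕ, m < n → n ≤ M → ∀ t : ℕ,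
      E m (t + 1) - E m t < E n (t + 1) - E n t := by
  intro m n
  induction n with
  | zero => omega
  | succ n ih =>
    intro hmn hnM t
    rcases (show m = n ∨ m < n by omega) with rfl | hlt
    · exact hstrict m (by omega) t
    · exact lt_trans (ih hlt (by omega) t) (hstrict n (by omega) t)

/-- Monotonicity of optimal recoding numbers: if
`Δ_{r+1,t} > Δ_{r,t}` for all `r ∈ {0,…,M−1}` and `t ∈ ℕ`, then every optimal
solution `{t_r}` satisfies `t_n ≥ t_m` for all `n > m` with `h_n, h_m ≠ 0` and `t_m > 0`. -/
theorem optimal_solution_monotone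
    (M : ℕ) (h : ℕ → ℝ) (hh0 : ∀ r, 0 ≤ h r)
    (hh1 : ∑ r ∈ Finset.range (M + 1), h r = 1)
    (E : ℕ → ℕ → ℝ)
    (hconc : ∀ r t, E r (t + 2) - E r (t + 1) ≤ E r (t + 1) - E r t)
    (hmono : ∀ r t, E r t ≤ E r (t + 1))
    (hzero : ∀ r, E r 0 = 0)
    (hstrict : ∀ r, r < M → ∀ t : ℕ,
      E r (t + 1) - E r t < E (r + 1) (t + 1) - E (r + 1) t)
    (tavg : ℝ) (htavg : 0 ≤ tavg)
    (tr : ℕ → ℝ)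
    (hfeas0 : ∀ r, 0 ≤ tr r)
    (hfeas : (∑ r ∈ Finset.range (M + 1), h r * tr r) = tavg)
    (hopt : ∀ s : ℕ → ℝ, (∀ r, 0 ≤ s r) →
      (∑ r ∈ Finset.range (M + 1), h r * s r) = tavg →
      ∑ r ∈ Finset.range (M + 1), h r * interp (E r) (s r)
        ≤ ∑ r ∈ Finset.range (M + 1), h r * interp (E r) (tr r)) :
    ∀ m n : ℕ, m < n → n ≤ M → h m ≠ 0 → h n ≠ 0 → 0 < tr m → tr m ≤ tr n := by
  intro m n hmn hnM hm hn htm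
  by_contra hcon
  push_neg at hcon
  have hmpos : 0 < h m := lt_of_le_of_ne (hh0 m) (Ne.symm hm)
  have hnpos : 0 < h n := lt_of_le_of_ne (hh0 n) (Ne.symm hn)
  set a := tr m with ha
  set b := tr n with hb
  -- a > 0, b < a
  have hb0 : 0 ≤ b := hfeas0 n
  -- k : left index for a
  set k : ℕ := (⌈a⌉ - 1).toNat with hkdef
  have hceil : (1:ℤ) ≤ ⌈a⌉ := by exact_mod_cast Int.ceil_pos.mpr htm
  have hkZ : (k : ℤ) = ⌈a⌉ - 1 := by omega
  have hkR : (k : ℝ) = (⌈a⌉ : ℝ) - 1 := by exact_mod_cast congrArg (Int.cast : ℤ → ℝ) hkZ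
  have hka : (k : ℝ) < a := by
    rw [hkR]; linarith [Int.ceil_lt_add_one a]
  have hak : a ≤ (k : ℝ) + 1 := by
    rw [hkR]; linarith [Int.le_ceil a]
  -- j : right index for b
  set j : ℕ := ⌊b⌋.toNat with hjdef
  have hjZ : (j : ℤ) = ⌊b⌋ := Int.toNat_of_nonneg (Int.floor_nonneg.mpr hb0)
  have hjb : (j : ℝ) ≤ b := by
    have := Int.floor_le b
    exact_mod_cast (by push_cast [← hjZ] at this ⊢; linarith : (j:ℝ) ≤ b)
  have hbj : b < (j : ℝ) + 1 := by
    have := Int.lt_floor_add_one b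
    push_cast [← hjZ] at this
    linarith
  have hjk : j ≤ k := by
    have : (j : ℝ) < (k : ℝ) + 1 := by linarith
    exact_mod_cast Nat.lt_succ_iff.mp (by exact_mod_cast (by push_cast; linarith : (j:ℝ) < (k:ℝ) + 1) : j < k + 1)
  -- the perturbation size
  set ε : ℝ := min ((a - k) * h m) (((j:ℝ) + 1 - b) * h n) with hεdef
  have hεpos : 0 < ε := lt_min (by nlinarith) (by nlinarith)
  set δm : ℝ := ε / h m with hδm
  set δn : ℝ := ε / h n with hδn
  have hδmpos : 0 < δm := div_pos hεpos hmpos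
  have hδnpos : 0 < δn := div_pos hεpos hnpos
  have hδmle : δm ≤ a - k := by
    rw [hδm, div_le_iff₀ hmpos]
    exact (min_le_left _ _).trans_eq rfl
  have hδnle : δn ≤ (j:ℝ) + 1 - b := by
    rw [hδn, div_le_iff₀ hnpos]
    exact min_le_right _ _
  -- the perturbed solution
  set s : ℕ → ℝ := fun r => if r = m then a - δm else if r = n then b + δn else tr r with hs
  have hmn' : m ≠ n := Nat.ne_of_lt hmn
  have hsm : s m = a - δm := by simp [hs]
  have hsn : s n = b + δn := by simp [hs, hmn'.symm]
  have hsfeas0 : ∀ r, 0 ≤ s r := by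
    intro r
    by_cases h1 : r = m
    · subst h1; rw [hsm]
      have : (0:ℝ) ≤ k := Nat.cast_nonneg k
      linarith
    · by_cases h2 : r = n
      · subst h2; rw [hsn]; linarith
      · simp [hs, h1, h2]; exact hfeas0 r
  have hmmem : m ∈ Finset.range (M + 1) := Finset.mem_range.mpr (by omega)
  have hnmem : n ∈ Finset.range (M + 1) := Finset.mem_range.mpr (by omega)
  have hmε : h m * δm = ε := by rw [hδm]; field_simp
  have hnε : h n * δn = ε := by rw [hδn]; field_simp
  -- feasibility of s
  have hsum : (∑ r ∈ Finset.range (M + 1), h r * s r) = tavg := by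
    have key : ∀ r ∈ Finset.range (M + 1),
        h r * s r = h r * tr r + ((if r = m then -ε else 0) + (if r = n then ε else 0)) := by
      intro r _
      by_cases h1 : r = m
      · simp only [h1, hsm, if_pos rfl, if_neg hmn']
        rw [← ha, show h m * (a - δm) = h m * a - h m * δm by ring, hmε]
        simp only [if_true]; ring
      · by_cases h2 : r = n
        · simp only [h2, hsn, if_neg hmn'.symm, if_pos rfl]
          rw [← hb, show h n * (b + δn) = h n * b + h n * δn by ring, hnε]
          simp only [if_true]; ring
        · simp [hs, h1, h2]
    rw [Finset.sum_congr rfl key, Finset.sum_add_distrib, Finset.sum_add_distrib,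
      Finset.sum_ite_eq' _ m (fun _ => -ε), Finset.sum_ite_eq' _ n (fun _ => ε),
      if_pos hmmem, if_pos hnmem, hfeas]
    ring
  -- the objective values
  have hIm : interp (E m) a - interp (E m) (a - δm) = δm * (E m (k+1) - E m k) := by
    rw [interp_on (E m) k a (le_of_lt hka) hak,
        interp_on (E m) k (a - δm) (by linarith) (by linarith)]
    ring
  have hIn : interp (E n) (b + δn) - interp (E n) b = δn * (E n (j+1) - E n j) := by
    rw [interp_on (E n) j b hjb (by linarith),
        interp_on (E n) j (b + δn) (by linarith) (by linarith)]
    ring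
  -- compute the new objective
  have hobj : (∑ r ∈ Finset.range (M + 1), h r * interp (E r) (s r))
      = (∑ r ∈ Finset.range (M + 1), h r * interp (E r) (tr r))
        + ε * ((E n (j+1) - E n j) - (E m (k+1) - E m k)) := by
    have key : ∀ r ∈ Finset.range (M + 1),
        h r * interp (E r) (s r) = h r * interp (E r) (tr r)
          + ((if r = m then -(ε * (E m (k+1) - E m k)) else 0)
             + (if r = n then ε * (E n (j+1) - E n j) else 0)) := by
      intro r _
      by_cases h1 : r = m
      · simp only [h1, hsm, if_pos rfl, if_neg hmn']
        have : interp (E m) (a - δm) = interp (E m) a - δm * (E m (k+1) - E m k) := by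
          linarith [hIm]
        rw [this, ← ha]
        rw [show h m * (interp (E m) a - δm * (E m (k+1) - E m k))
            = h m * interp (E m) a - (h m * δm) * (E m (k+1) - E m k) by ring, hmε]
        simp only [if_true]; ring
      · by_cases h2 : r = n
        · simp only [h2, hsn, if_neg hmn'.symm, if_pos rfl]
          have : interp (E n) (b + δn) = interp (E n) b + δn * (E n (j+1) - E n j) := by
            linarith [hIn]
          rw [this, ← hb]
          rw [show h n * (interp (E n) b + δn * (E n (j+1) - E n j))
              = h n * interp (E n) b + (h n * δn) * (E n (j+1) - E n j) by ring, hnε]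
          simp only [if_true]; ring
        · simp [hs, h1, h2]
    rw [Finset.sum_congr rfl key, Finset.sum_add_distrib, Finset.sum_add_distrib,
      Finset.sum_ite_eq' _ m (fun _ => -(ε * (E m (k+1) - E m k))),
      Finset.sum_ite_eq' _ n (fun _ => ε * (E n (j+1) - E n j)),
      if_pos hmmem, if_pos hnmem]
    ring
  -- the improvement is strictly positive
  have hDn : E n (k+1) - E n k ≤ E n (j+1) - E n j := diff_anti (E n) (hconc n) j k hjk
  have hDm : E m (k+1) - E m k < E n (k+1) - E n k := diff_chain M E hstrict m n hmn hnM k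
  have himp : 0 < ε * ((E n (j+1) - E n j) - (E m (k+1) - E m k)) := by
    apply mul_pos hεpos; linarith
  have := hopt s hsfeas0 hsum
  linarith [hobj ▸ this]
end

section
/- Greedy correctness: The water-filling greedy algorithm that, starting from t_r = 0 for all r and remaining budget u = t_avg, repeatedly picks r maximizing Δ_{r,⌊t_r⌋} and increases t_r to the next integer (or by u/h_r if the budget is insufficient, then stopping), terminates with a feasible solution {t_r} (Σ_r h_r t_r = t_avg) that is optimal for max Σ_r h_r E_r(t_r) subject to Σ_r h_r t_r = t_avg, t_r ≥ 0, and has at most one non-integer coordinate. -/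
open scoped Classical

/-- A rank `r ∈ {0,…,M}` maximizing the slope `Δ_{r,⌊t_r⌋}`, where
`Δ_{r,t} = E_r(t+1) − E_r(t)`. -/
noncomputable def pick (M : ℕ) (E : ℕ → ℕ → ℝ) (t : ℕ → ℝ) : ℕ :=
  Classical.choose
    ((Finset.range (M + 1)).exists_max_image
      (fun r => E r (⌊t r⌋.toNat + 1) - E r ⌊t r⌋.toNat) ⟨0, by simp⟩)

/-- One step of the water-filling greedy algorithm on the state (recoding numbers,
remaining budget): pick `r` maximizing `Δ_{r,⌊t_r⌋}` and raise `t_r` to the next integer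
if the remaining budget suffices, otherwise spend the whole remaining budget on `t_r`. -/
noncomputable def greedyStep (M : ℕ) (h : ℕ → ℝ) (E : ℕ → ℕ → ℝ)
    (st : (ℕ → ℝ) × ℝ) : (ℕ → ℝ) × ℝ :=
  if st.2 ≤ 0 then st
  else
    let t := st.1
    let r := pick M E t
    if h r * (1 - (t r - (⌊t r⌋ : ℝ))) ≤ st.2 then
      (Function.update t r ((⌊t r⌋ : ℝ) + 1), st.2 - h r * (1 - (t r - (⌊t r⌋ : ℝ))))
    else
      (Function.update t r (t r + st.2 / h r), 0)

/-!
The interpolation of a concave sequence `E` has slope `fwdDiff 1 E n = E (n + 1) - E n` on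
`[n, n + 1]` and lies below each of these lines. The greedy keeps the water-filling invariant
that no marginal gain `fwdDiff 1 E_r ⌊t_r⌋₊` still available exceeds a gain already spent. When the
budget is exhausted, the largest available gain `λ` therefore lies between the left and right
slopes of every `interp E_r` at `t_r`, and the supergradient inequalities
`interp E_r s - interp E_r t_r ≤ λ (s - t_r)`, weighted by `h_r` and summed, give optimality against
every feasible `s`. Each step either exhausts the budget or spends at least `min_r h_r` of it, and
only a step that exhausts it leaves a non-integer coordinate.
-/

open Finset Function

section Interpolation

lemma interp_natCast (E : ℕ → ℝ) (n : ℕ) : interp E n = E n := by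
  simp [interp]

lemma interp_of_mem_Icc (E : ℕ → ℝ) {n : ℕ} {x : ℝ} (hx : x ∈ Set.Icc (n : ℝ) (n + 1)) :
    interp E x = E n + (x - n) * fwdDiff 1 E n := by
  obtain ⟨hnx, hxn⟩ := hx
  rcases hxn.lt_or_eq with hxn | rfl
  · have hfloor : ⌊x⌋ = n := Int.floor_eq_iff.2 ⟨by exact_mod_cast hnx, by push_cast; linarith⟩
    simp only [interp, fwdDiff, hfloor, Int.toNat_natCast, Int.cast_natCast]
    ring
  · rw [← Nat.cast_succ, interp_natCast, fwdDiff]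
    push_cast
    ring

variable {E : ℕ → ℝ}

lemma sub_le_mul_fwdDiff (hE : Antitone (fwdDiff 1 E)) {m n : ℕ} (hmn : m ≤ n) :
    E n - E m ≤ (n - m) * fwdDiff 1 E m := by
  induction n, hmn using Nat.le_induction with
  | base => simp
  | succ n hmn ih =>
    have := hE hmn
    simp only [fwdDiff] at this ih ⊢
    push_cast
    linarith

lemma mul_fwdDiff_le_sub (hE : Antitone (fwdDiff 1 E)) {m n : ℕ} (hmn : m ≤ n) :
    (n - m) * fwdDiff 1 E n ≤ E n - E m := by
  induction n, hmn using Nat.le_induction with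
  | base => simp
  | succ n hmn ih =>
    have hmono := hE n.le_succ
    have : ((n : ℝ) - m) * fwdDiff 1 E (n + 1) ≤ (n - m) * fwdDiff 1 E n :=
      mul_le_mul_of_nonneg_left hmono (by simp [hmn])
    simp only [fwdDiff] at this hmono ih ⊢
    push_cast
    linarith

lemma le_add_mul_fwdDiff (hE : Antitone (fwdDiff 1 E)) (k n : ℕ) :
    E k ≤ E n + (k - n) * fwdDiff 1 E n := by
  rcases le_total n k with hnk | hkn
  · linarith [sub_le_mul_fwdDiff hE hnk]
  · linarith [mul_fwdDiff_le_sub hE hkn]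

lemma interp_le_add_mul_fwdDiff (hE : Antitone (fwdDiff 1 E)) {x : ℝ} (hx : 0 ≤ x) (n : ℕ) :
    interp E x ≤ E n + (x - n) * fwdDiff 1 E n := by
  set m := ⌊x⌋₊
  have hcell : x ∈ Set.Icc (m : ℝ) (m + 1) := ⟨Nat.floor_le hx, (Nat.lt_floor_add_one x).le⟩
  rw [interp_of_mem_Icc E hcell]
  have hm := le_add_mul_fwdDiff hE m n
  have hm1 := le_add_mul_fwdDiff hE (m + 1) n
  have hθ : 0 ≤ x - m := sub_nonneg.2 hcell.1
  have hθ' : 0 ≤ 1 - (x - m) := by linarith [hcell.2]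
  simp only [fwdDiff] at hm hm1 ⊢
  push_cast at hm1
  nlinarith [mul_le_mul_of_nonneg_left hm hθ', mul_le_mul_of_nonneg_left hm1 hθ]

lemma interp_sub_le_of_mem_Icc (hE : Antitone (fwdDiff 1 E)) {n : ℕ} {s t : ℝ} (hs : 0 ≤ s)
    (ht : t ∈ Set.Icc (n : ℝ) (n + 1)) : interp E s - interp E t ≤ fwdDiff 1 E n * (s - t) := by
  rw [interp_of_mem_Icc E ht]
  linarith [interp_le_add_mul_fwdDiff hE hs n]

/-- Supergradient inequality: `fwdDiff 1 E ⌊t⌋₊` and `fwdDiff 1 E (⌈t⌉₊ - 1)` are the right and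
left slopes of `interp E` at `t`. -/
lemma interp_sub_le_mul_sub (hE : Antitone (fwdDiff 1 E)) {s t lam : ℝ} (hs : 0 ≤ s) (ht : 0 ≤ t)
    (hright : fwdDiff 1 E ⌊t⌋₊ ≤ lam) (hleft : 0 < t → lam ≤ fwdDiff 1 E (⌈t⌉₊ - 1)) :
    interp E s - interp E t ≤ lam * (s - t) := by
  rcases le_or_gt t s with hts | hst
  · have hcell : t ∈ Set.Icc (⌊t⌋₊ : ℝ) (⌊t⌋₊ + 1) := ⟨Nat.floor_le ht, (Nat.lt_floor_add_one t).le⟩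
    calc interp E s - interp E t ≤ fwdDiff 1 E ⌊t⌋₊ * (s - t) :=
          interp_sub_le_of_mem_Icc hE hs hcell
      _ ≤ lam * (s - t) := mul_le_mul_of_nonneg_right hright (sub_nonneg.2 hts)
  · have htpos : 0 < t := hs.trans_lt hst
    have hceil : 0 < ⌈t⌉₊ := Nat.ceil_pos.2 htpos
    have hcell : t ∈ Set.Icc ((⌈t⌉₊ - 1 : ℕ) : ℝ) ((⌈t⌉₊ - 1 : ℕ) + 1) := by
      refine ⟨(Nat.lt_ceil.1 (by omega)).le, ?_⟩
      rw [← Nat.cast_succ, Nat.succ_eq_add_one, Nat.sub_add_cancel hceil]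
      exact Nat.le_ceil t
    calc interp E s - interp E t ≤ fwdDiff 1 E (⌈t⌉₊ - 1) * (s - t) :=
          interp_sub_le_of_mem_Icc hE hs hcell
      _ ≤ lam * (s - t) := mul_le_mul_of_nonpos_right (hleft htpos) (by linarith)

end Interpolation

theorem sum_mul_interp_le {ι : Type*} (S : Finset ι) (w : ι → ℝ) (hw : ∀ i ∈ S, 0 ≤ w i)
    (E : ι → ℕ → ℝ) (hE : ∀ i ∈ S, Antitone (fwdDiff 1 (E i))) (s t : ι → ℝ)
    (hs : ∀ i ∈ S, 0 ≤ s i) (ht : ∀ i ∈ S, 0 ≤ t i) (lam : ℝ)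
    (hright : ∀ i ∈ S, fwdDiff 1 (E i) ⌊t i⌋₊ ≤ lam)
    (hleft : ∀ i ∈ S, 0 < t i → lam ≤ fwdDiff 1 (E i) (⌈t i⌉₊ - 1))
    (hsum : ∑ i ∈ S, w i * s i = ∑ i ∈ S, w i * t i) :
    ∑ i ∈ S, w i * interp (E i) (s i) ≤ ∑ i ∈ S, w i * interp (E i) (t i) := by
  have hterm : ∀ i ∈ S, w i * interp (E i) (s i) - w i * interp (E i) (t i)
      ≤ lam * (w i * s i - w i * t i) := fun i hi => by
    have := mul_le_mul_of_nonneg_left (interp_sub_le_mul_sub (hE i hi) (hs i hi) (ht i hi)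
      (hright i hi) (hleft i hi)) (hw i hi)
    linarith
  have := sum_le_sum hterm
  rw [sum_sub_distrib, ← mul_sum, sum_sub_distrib, hsum, sub_self, mul_zero] at this
  linarith

lemma sum_mul_update {ι : Type*} [DecidableEq ι] (s : Finset ι) (w t : ι → ℝ) {p : ι}
    (hp : p ∈ s) (v : ℝ) :
    ∑ i ∈ s, w i * update t p v i = ∑ i ∈ s, w i * t i + w p * (v - t p) := by
  have hterm : ∀ i, w i * update t p v i = w i * t i + if i = p then w p * (v - t p) else 0 := by
    intro i
    by_cases hi : i = p
    · subst hi; simp only [update_self, if_true]; ring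
    · simp [hi]
  rw [sum_congr rfl fun i _ => hterm i, sum_add_distrib, sum_ite_eq' s p, if_pos hp]

lemma ceil_natCast_add_sub_one (n : ℕ) {d : ℝ} (hd0 : 0 < d) (hd1 : d ≤ 1) :
    ⌈(n : ℝ) + d⌉₊ - 1 = n := by
  rw [Nat.ceil_eq_iff n.succ_ne_zero |>.mpr ⟨by push_cast; linarith, by push_cast; linarith⟩]
  rfl

section Greedy

variable {M : ℕ} {h : ℕ → ℝ} {E : ℕ → ℕ → ℝ} {tavg : ℝ}

lemma pick_mem (M : ℕ) (E : ℕ → ℕ → ℝ) (t : ℕ → ℝ) : pick M E t ∈ range (M + 1) :=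
  (Classical.choose_spec ((range (M + 1)).exists_max_image
    (fun r => E r (⌊t r⌋.toNat + 1) - E r ⌊t r⌋.toNat) ⟨0, by simp⟩)).1

lemma fwdDiff_le_fwdDiff_pick (t : ℕ → ℝ) {r : ℕ} (hr : r ∈ range (M + 1)) :
    fwdDiff 1 (E r) ⌊t r⌋₊ ≤ fwdDiff 1 (E (pick M E t)) ⌊t (pick M E t)⌋₊ := by
  rw [← Int.floor_toNat, ← Int.floor_toNat]
  exact (Classical.choose_spec ((range (M + 1)).exists_max_image
    (fun r => E r (⌊t r⌋.toNat + 1) - E r ⌊t r⌋.toNat) ⟨0, by simp⟩)).2 r hr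

lemma greedyStep_of_pos {t : ℕ → ℝ} {u : ℝ} (hu : 0 < u) (hp : 0 < h (pick M E t)) {n : ℕ}
    (hn : t (pick M E t) = n) :
    greedyStep M h E (t, u) =
      (update t (pick M E t) (n + min 1 (u / h (pick M E t))), u - min (h (pick M E t)) u) := by
  simp only [greedyStep, not_le.2 hu, if_false, hn, Int.floor_natCast, Int.cast_natCast, sub_self,
    sub_zero, mul_one]
  split_ifs with hfull
  · rw [min_eq_left ((one_le_div hp).2 hfull), min_eq_left hfull]
  · rw [min_eq_right ((div_le_one hp).2 (not_le.1 hfull).le), min_eq_right (not_le.1 hfull).le,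
      sub_self]

/-- `fwdDiff_le` is the water-filling invariant: `⌈t_r⌉₊ - 1` indexes the last gain spent on `r`. -/
structure GreedyInv (M : ℕ) (h : ℕ → ℝ) (E : ℕ → ℕ → ℝ) (tavg : ℝ) (st : (ℕ → ℝ) × ℝ) :
    Prop where
  budget_nonneg : 0 ≤ st.2
  nonneg : ∀ r, 0 ≤ st.1 r
  sum_add_budget : ∑ r ∈ range (M + 1), h r * st.1 r + st.2 = tavg
  natCast_of_budget_pos : 0 < st.2 → ∀ r, ∃ n : ℕ, st.1 r = n
  natCast_of_ne : ∃ r₀, ∀ r ≠ r₀, ∃ n : ℕ, st.1 r = n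
  fwdDiff_le : ∀ r ∈ range (M + 1), 0 < st.1 r → ∀ r' ∈ range (M + 1),
    fwdDiff 1 (E r') ⌊st.1 r'⌋₊ ≤ fwdDiff 1 (E r) (⌈st.1 r⌉₊ - 1)

namespace GreedyInv

lemma init (M : ℕ) (h : ℕ → ℝ) (E : ℕ → ℕ → ℝ) (htavg : 0 ≤ tavg) :
    GreedyInv M h E tavg (fun _ => 0, tavg) where
  budget_nonneg := htavg
  nonneg _ := le_rfl
  sum_add_budget := by simp
  natCast_of_budget_pos _ _ := ⟨0, by simp⟩
  natCast_of_ne := ⟨0, fun _ _ => ⟨0, by simp⟩⟩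
  fwdDiff_le _ _ h0 := absurd h0 (lt_irrefl 0)

lemma step (hh0 : ∀ r ∈ range (M + 1), 0 < h r) (hE : ∀ r, Antitone (fwdDiff 1 (E r)))
    {st : (ℕ → ℝ) × ℝ} (hinv : GreedyInv M h E tavg st) :
    GreedyInv M h E tavg (greedyStep M h E st) := by
  obtain ⟨t, u⟩ := st
  rcases le_or_gt u 0 with hu | hu
  · rwa [greedyStep, if_pos hu]
  set p := pick M E t
  have hpM := pick_mem M E t
  have hp := hh0 p hpM
  have hnat : ∀ r, ∃ n : ℕ, t r = n := hinv.natCast_of_budget_pos hu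
  obtain ⟨n, hn⟩ := hnat p
  set d := min 1 (u / h p)
  have hd0 : 0 < d := lt_min one_pos (div_pos hu hp)
  have hspent : h p * d = min (h p) u := by
    rw [mul_min_of_nonneg _ _ hp.le, mul_one, mul_div_cancel₀ _ hp.ne']
  rw [greedyStep_of_pos hu hp hn]
  set t' := update t p (n + d)
  have hle : t ≤ t' := le_update_iff.2 ⟨by linarith, fun _ _ => le_rfl⟩
  have hceil : ⌈t' p⌉₊ - 1 = n := by
    rw [show t' p = n + d by simp [t'], ceil_natCast_add_sub_one n hd0 (min_le_left _ _)]
  have hleft : ∀ r ∈ range (M + 1), 0 < t' r →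
      fwdDiff 1 (E p) ⌊t p⌋₊ ≤ fwdDiff 1 (E r) (⌈t' r⌉₊ - 1) := by
    intro r hr hr0
    by_cases hrp : r = p
    · rw [hrp, hceil, hn, Nat.floor_natCast]
    · simp only [t', update_of_ne hrp] at hr0 ⊢
      exact hinv.fwdDiff_le r hr hr0 p hpM
  refine ⟨sub_nonneg.2 (min_le_right _ _), fun r => (hinv.nonneg r).trans (hle r), ?_, ?_,
    ⟨p, fun r hr => by simpa [t', hr] using hnat r⟩, ?_⟩
  · show ∑ r ∈ range (M + 1), h r * t' r + (u - min (h p) u) = tavg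
    rw [sum_mul_update _ h t hpM, hn, ← hspent]
    linear_combination hinv.sum_add_budget
  · intro hpos r
    have hd : d = 1 := by
      rw [← mul_eq_left₀ hp.ne', hspent]
      exact min_eq_left_iff.2 (le_of_lt (by simpa using hpos))
    by_cases hr : r = p
    · exact ⟨n + 1, by simp [t', hr, hd]⟩
    · simpa [t', hr] using hnat r
  · intro r hr hr0 r' hr'
    exact (hE r' (Nat.floor_le_floor (hle r'))).trans
      ((fwdDiff_le_fwdDiff_pick t hr').trans (hleft r hr hr0))

lemma budget_step_le (hh0 : ∀ r ∈ range (M + 1), 0 < h r) {c : ℝ}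
    (hc : ∀ r ∈ range (M + 1), c ≤ h r) {st : (ℕ → ℝ) × ℝ} (hinv : GreedyInv M h E tavg st)
    (hu : 0 < st.2) : (greedyStep M h E st).2 ≤ max 0 (st.2 - c) := by
  obtain ⟨t, u⟩ := st
  obtain ⟨n, hn⟩ := hinv.natCast_of_budget_pos hu (pick M E t)
  rw [greedyStep_of_pos hu (hh0 _ (pick_mem M E t)) hn]
  rcases min_choice (h (pick M E t)) u with hmin | hmin <;> rw [hmin]
  · exact le_max_of_le_right (sub_le_sub_left (hc _ (pick_mem M E t)) u)
  · exact le_max_of_le_left (sub_self u).le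

lemma exists_iterate_budget_eq_zero (hh0 : ∀ r ∈ range (M + 1), 0 < h r)
    (hE : ∀ r, Antitone (fwdDiff 1 (E r))) {st : (ℕ → ℝ) × ℝ} (hinv : GreedyInv M h E tavg st) :
    ∃ N, GreedyInv M h E tavg ((greedyStep M h E)^[N] st) ∧ ((greedyStep M h E)^[N] st).2 = 0 := by
  set c := (range (M + 1)).inf' nonempty_range_add_one h
  have hc : 0 < c := (lt_inf'_iff _).2 hh0
  obtain ⟨k, hk⟩ := exists_nat_ge (st.2 / c)
  replace hk : st.2 ≤ k * c := (div_le_iff₀ hc).1 hk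
  induction k generalizing st with
  | zero => exact ⟨0, hinv, le_antisymm (by simpa using hk) hinv.budget_nonneg⟩
  | succ k ih =>
    rcases hinv.budget_nonneg.eq_or_lt with hu | hu
    · exact ⟨0, hinv, hu.symm⟩
    have hbudget := hinv.budget_step_le hh0 (c := c) (fun r hr => inf'_le h hr) hu
    obtain ⟨N, hN⟩ := ih (hinv.step hh0 hE) (hbudget.trans (max_le (by positivity) (by
      push_cast at hk; linarith)))
    exact ⟨N + 1, by rwa [iterate_succ_apply]⟩

end GreedyInv

end Greedy

theorem greedy_correct_general
    (M : ℕ) (h : ℕ → ℝ) (hh0 : ∀ r ∈ Finset.range (M + 1), 0 < h r)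
    (E : ℕ → ℕ → ℝ)
    (hconc : ∀ r t, E r (t + 2) - E r (t + 1) ≤ E r (t + 1) - E r t)
    (tavg : ℝ) (htavg : 0 ≤ tavg) :
    ∃ N : ℕ,
      ((greedyStep M h E)^[N] (fun _ => 0, tavg)).2 = 0
      ∧ (∀ r, 0 ≤ ((greedyStep M h E)^[N] (fun _ => 0, tavg)).1 r)
      ∧ (∑ r ∈ Finset.range (M + 1),
            h r * ((greedyStep M h E)^[N] (fun _ => 0, tavg)).1 r) = tavg
      ∧ (∀ s : ℕ → ℝ, (∀ r, 0 ≤ s r) →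
          (∑ r ∈ Finset.range (M + 1), h r * s r) = tavg →
          ∑ r ∈ Finset.range (M + 1), h r * interp (E r) (s r)
            ≤ ∑ r ∈ Finset.range (M + 1),
                h r * interp (E r) (((greedyStep M h E)^[N] (fun _ => 0, tavg)).1 r))
      ∧ (∃ r0 : ℕ, ∀ r ∈ Finset.range (M + 1), r ≠ r0 →
          ∃ n : ℕ, ((greedyStep M h E)^[N] (fun _ => 0, tavg)).1 r = (n : ℝ)) := by
  have hE : ∀ r, Antitone (fwdDiff 1 (E r)) := fun r => antitone_nat_of_succ_le (hconc r)
  obtain ⟨N, hinv, hN⟩ := (GreedyInv.init M h E htavg).exists_iterate_budget_eq_zero hh0 hE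
  set t := ((greedyStep M h E)^[N] (fun _ => 0, tavg)).1
  have hsum : ∑ r ∈ range (M + 1), h r * t r = tavg := by
    simpa [hN] using hinv.sum_add_budget
  obtain ⟨r₀, hr₀⟩ := hinv.natCast_of_ne
  refine ⟨N, hN, hinv.nonneg, hsum, fun s hs hs_sum => ?_, r₀, fun r _ hr => hr₀ r hr⟩
  set p := pick M E t
  exact sum_mul_interp_le _ h (fun r hr => (hh0 r hr).le) E (fun r _ => hE r) s t
    (fun r _ => hs r) (fun r _ => hinv.nonneg r) (fwdDiff 1 (E p) ⌊t p⌋₊)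
    (fun r hr => fwdDiff_le_fwdDiff_pick t hr)
    (fun r hr hr0 => hinv.fwdDiff_le r hr hr0 p (pick_mem M E t)) (hs_sum.trans hsum.symm)

/-- Greedy correctness: starting from `t_r = 0` and budget `t_avg`,
the water-filling greedy terminates (the budget reaches `0` after finitely many steps)
with a feasible solution that is optimal for `max Σ_r h_r E_r(t_r)` subject to
`Σ_r h_r t_r = t_avg`, `t_r ≥ 0`, and that has at most one non-integer coordinate. -/
theorem greedy_correct
    (M : ℕ) (h : ℕ → ℝ) (hh0 : ∀ r ∈ Finset.range (M + 1), 0 < h r)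
    (hh1 : ∑ r ∈ Finset.range (M + 1), h r = 1)
    (E : ℕ → ℕ → ℝ)
    (hconc : ∀ r t, E r (t + 2) - E r (t + 1) ≤ E r (t + 1) - E r t)
    (hmono : ∀ r t, E r t ≤ E r (t + 1))
    (hzero : ∀ r, E r 0 = 0)
    (tavg : ℝ) (htavg : 0 ≤ tavg) :
    ∃ N : ℕ,
      ((greedyStep M h E)^[N] (fun _ => 0, tavg)).2 = 0
      ∧ (∀ r, 0 ≤ ((greedyStep M h E)^[N] (fun _ => 0, tavg)).1 r)
      ∧ (∑ r ∈ Finset.range (M + 1),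
            h r * ((greedyStep M h E)^[N] (fun _ => 0, tavg)).1 r) = tavg
      ∧ (∀ s : ℕ → ℝ, (∀ r, 0 ≤ s r) →
          (∑ r ∈ Finset.range (M + 1), h r * s r) = tavg →
          ∑ r ∈ Finset.range (M + 1), h r * interp (E r) (s r)
            ≤ ∑ r ∈ Finset.range (M + 1),
                h r * interp (E r) (((greedyStep M h E)^[N] (fun _ => 0, tavg)).1 r))
      ∧ (∃ r0 : ℕ, ∀ r ∈ Finset.range (M + 1), r ≠ r0 →
          ∃ n : ℕ, ((greedyStep M h E)^[N] (fun _ => 0, tavg)).1 r = (n : ℝ)) :=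
  greedy_correct_general M h hh0 E hconc tavg htavg
end
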